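/- arXiv:math/9905013 — 4 statements merged into one kernel-verified Lean document; each statement's English description precedes it below -/
import Mathlib

section
/- If the modular pair (δ,σ) is in involution, then for every n ≥ 1 and every 1 ≤ i ≤ n the cyclic and face operators satisfy τₙ ∘ δᵢ = δᵢ₋₁ ∘ τₙ₋₁ as maps H^{⊗(n-1)} → H^{⊗n}. -/
open scoped TensorProduct

variable (k H : Type) [Field k] [Ring H] [HopfAlgebra k H]

/-- The tensor powers `H^{⊗n}` of `H` (bundled with their componentwise ring and
algebra structures), realized as iterated binary tensor products
`H^{⊗0} = k`, `H^{⊗(n+1)} = H ⊗ H^{⊗n}`. -/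
noncomputable def TpowBundle :
    (n : ℕ) → Σ' (T : Type), Σ' (R : Ring T), @Algebra k T _ R.toSemiring
  | 0 => ⟨k, inferInstance, inferInstance⟩
  | n + 1 =>
    letI p := TpowBundle n
    letI : Ring p.1 := p.2.1
    letI : Algebra k p.1 := p.2.2
    ⟨H ⊗[k] p.1, inferInstance, inferInstance⟩

/-- The tensor power `H^{⊗n}`; the componentwise product of elementary tensors is the
ring multiplication `*` of `Tpow k H n`. -/
noncomputable def Tpow (n : ℕ) : Type := (TpowBundle k H n).1

noncomputable instance instTpowRing (n : ℕ) : Ring (Tpow k H n) := (TpowBundle k H n).2.1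
noncomputable instance instTpowAlgebra (n : ℕ) : Algebra k (Tpow k H n) :=
  (TpowBundle k H n).2.2

/-- The elementary tensor `h¹ ⊗ h² ⊗ … ⊗ hⁿ ∈ H^{⊗n}` associated to a tuple
`(h¹, …, hⁿ)`. -/
noncomputable def el : (n : ℕ) → (Fin n → H) → Tpow k H n
  | 0, _ => (1 : k)
  | n + 1, f => show H ⊗[k] Tpow k H n from f 0 ⊗ₜ[k] el n (fun i => f i.succ)

/-- The `δ`-twisted antipode `S̃(h) = Σ δ(h₍₁₎) S(h₍₂₎)` of `H` with character `δ`. -/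
noncomputable def twistedAntipode (δ : H →ₐ[k] k) : H →ₗ[k] H :=
  (TensorProduct.lid k H).toLinearMap
    ∘ₗ TensorProduct.map δ.toLinearMap (HopfAlgebra.antipode (R := k))
    ∘ₗ Coalgebra.comul

/-- The iterated coproduct `Δ^n : H → H^{⊗(n+1)}`, with `Δ⁰ = id` and
`Δ^{n+1} = (id ⊗ Δ^n) ∘ Δ` (Sweedler notation: `Δ^{n-1} h = Σ h₍₁₎ ⊗ … ⊗ h₍ₙ₎ ∈ H^{⊗n}`). -/
noncomputable def iterComul : (n : ℕ) → H →ₗ[k] Tpow k H (n + 1)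
  | 0 => (TensorProduct.mk k H k).flip 1
  | n + 1 =>
    (TensorProduct.map LinearMap.id (iterComul n) ∘ₗ Coalgebra.comul :
      H →ₗ[k] H ⊗[k] Tpow k H (n + 1))

/-- Appending a fixed element `a ∈ H` as a last tensor factor,
`h¹ ⊗ … ⊗ hⁿ ↦ h¹ ⊗ … ⊗ hⁿ ⊗ a`, as a linear map `H^{⊗n} → H^{⊗(n+1)}`. -/
noncomputable def appendEnd (a : H) : (n : ℕ) → Tpow k H n →ₗ[k] Tpow k H (n + 1)
  | 0 => (LinearMap.toSpanSingleton k _ (a ⊗ₜ[k] (1 : k)) : k →ₗ[k] H ⊗[k] k)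
  | n + 1 =>
    (TensorProduct.map LinearMap.id (appendEnd a n) :
      H ⊗[k] Tpow k H n →ₗ[k] H ⊗[k] Tpow k H (n + 1))

/-- The cyclic operator `τₙ : H^{⊗n} → H^{⊗n}`,
`τₙ(h¹ ⊗ … ⊗ hⁿ) = (Δ^{n-1} S̃(h¹)) · (h² ⊗ … ⊗ hⁿ ⊗ σ)`, where `·` is the
componentwise product of `H^{⊗n}` (on `H^{⊗0} = k` it is the identity). -/
noncomputable def cyc (δ : H →ₐ[k] k) (σ : H) : (n : ℕ) → Tpow k H n →ₗ[k] Tpow k H n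
  | 0 => LinearMap.id
  | n + 1 =>
    (LinearMap.mul' k (Tpow k H (n + 1))
        ∘ₗ TensorProduct.map (iterComul k H n ∘ₗ twistedAntipode k H δ) (appendEnd k H σ n) :
      H ⊗[k] Tpow k H n →ₗ[k] Tpow k H (n + 1))

/-- The face operators `δᵢ : H^{⊗n} → H^{⊗(n+1)}` (for `0 ≤ i ≤ n+1`):
`δ₀` inserts a `1` in front, `δᵢ` (for `1 ≤ i ≤ n`) applies the coproduct to the `i`-th
tensor factor, and the last face `δ_{n+1}` appends the group-like element `σ` at the end. -/
noncomputable def face (σ : H) : (n i : ℕ) → Tpow k H n →ₗ[k] Tpow k H (n + 1)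
  | n, 0 => (TensorProduct.mk k H (Tpow k H n) 1 : Tpow k H n →ₗ[k] H ⊗[k] Tpow k H n)
  | 0, _ + 1 => (LinearMap.toSpanSingleton k _ (σ ⊗ₜ[k] (1 : k)) : k →ₗ[k] H ⊗[k] k)
  | m + 1, 1 =>
    ((TensorProduct.assoc k H H (Tpow k H m)).toLinearMap
        ∘ₗ TensorProduct.map Coalgebra.comul LinearMap.id :
      H ⊗[k] Tpow k H m →ₗ[k] H ⊗[k] (H ⊗[k] Tpow k H m))
  | m + 1, i + 2 =>
    (TensorProduct.map LinearMap.id (face σ m (i + 1)) :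
      H ⊗[k] Tpow k H m →ₗ[k] H ⊗[k] Tpow k H (m + 1))


section ConvLibrary

open TensorProduct LinearMap Coalgebra

variable {K : Type*} [CommSemiring K] {A : Type*} [Semiring A] [Bialgebra K A]
variable {C : Type*} [Semiring C] [Algebra K C] {C' : Type*} [Semiring C'] [Algebra K C']

/-- convolution product on `Hom(A, C)` -/
noncomputable def conv (f g : A →ₗ[K] C) : A →ₗ[K] C :=
  LinearMap.mul' K C ∘ₗ TensorProduct.map f g ∘ₗ Coalgebra.comul

lemma conv_repr {ι : Type*} (f g : A →ₗ[K] C) {a : A} (r : Coalgebra.Repr K a ι) :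
    conv f g a = ∑ i ∈ r.index, f (r.left i) * g (r.right i) := by
  simp [conv, ← r.eq, map_sum]

lemma counit_smul_sum {ι : Type*} {a : A} (r : Coalgebra.Repr K a ι) :
    ∑ i ∈ r.index, Coalgebra.counit (R := K) (r.right i) • r.left i = a := by
  have := congrArg (TensorProduct.rid K A) (Coalgebra.sum_tmul_counit_eq r)
  simpa only [map_sum, TensorProduct.rid_tmul, one_smul] using this

lemma counit_smul_sum' {ι : Type*} {a : A} (r : Coalgebra.Repr K a ι) :
    ∑ i ∈ r.index, Coalgebra.counit (R := K) (r.left i) • r.right i = a := by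
  have := congrArg (TensorProduct.lid K A) (Coalgebra.sum_counit_tmul_eq r)
  simpa only [map_sum, TensorProduct.lid_tmul, one_smul] using this

lemma conv_assoc (f g h : A →ₗ[K] C) : conv (conv f g) h = conv f (conv g h) := by
  ext a
  set r := ℛ K a with hr
  set a₁ : (i : A × A) → Coalgebra.Repr K (r.left i) (A × A) := fun i => ℛ K (r.left i) with ha₁
  set a₂ : (i : A × A) → Coalgebra.Repr K (r.right i) (A × A) := fun i => ℛ K (r.right i) with ha₂
  have key := Coalgebra.sum_tmul_tmul_eq r a₁ a₂
  have key2 := congrArg (LinearMap.mul' K C ∘ₗ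
    TensorProduct.map f (LinearMap.mul' K C ∘ₗ TensorProduct.map g h)) key
  simp only [map_sum, LinearMap.comp_apply, TensorProduct.map_tmul,
    LinearMap.mul'_apply] at key2
  calc conv (conv f g) h a
      = ∑ i ∈ r.index, (∑ j ∈ (a₁ i).index,
          f ((a₁ i).left j) * g ((a₁ i).right j)) * h (r.right i) := by
        rw [conv_repr _ _ r]
        exact Finset.sum_congr rfl fun i _ => by rw [conv_repr _ _ (a₁ i)]
    _ = ∑ i ∈ r.index, ∑ j ∈ (a₁ i).index,
          f ((a₁ i).left j) * (g ((a₁ i).right j) * h (r.right i)) := by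
        simp [Finset.sum_mul, mul_assoc]
    _ = ∑ i ∈ r.index, ∑ j ∈ (a₂ i).index,
          f (r.left i) * (g ((a₂ i).left j) * h ((a₂ i).right j)) := key2
    _ = conv f (conv g h) a := by
        rw [conv_repr _ _ r]
        refine (Finset.sum_congr rfl fun i _ => ?_).symm
        rw [conv_repr _ _ (a₂ i), Finset.mul_sum]

/-- the convolution unit -/
noncomputable def cunit : A →ₗ[K] C := Algebra.linearMap K C ∘ₗ Coalgebra.counit

lemma cunit_apply (a : A) :
    (cunit (C := C) : A →ₗ[K] C) a = Coalgebra.counit (R := K) a • 1 := by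
  simp [cunit, Algebra.smul_def]

lemma conv_cunit_right (f : A →ₗ[K] C) : conv f cunit = f := by
  ext a
  rw [conv_repr _ _ (ℛ K a)]
  simp only [cunit_apply, mul_smul_comm, mul_one]
  simp_rw [← map_smul]
  rw [← map_sum, counit_smul_sum (ℛ K a)]

lemma conv_cunit_left (f : A →ₗ[K] C) : conv cunit f = f := by
  ext a
  rw [conv_repr _ _ (ℛ K a)]
  simp only [cunit_apply, smul_mul_assoc, one_mul]
  simp_rw [← map_smul]
  rw [← map_sum, counit_smul_sum' (ℛ K a)]

lemma algHom_comp_conv (φ : C →ₐ[K] C') (f g : A →ₗ[K] C) :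
    φ.toLinearMap ∘ₗ conv f g = conv (φ.toLinearMap ∘ₗ f) (φ.toLinearMap ∘ₗ g) := by
  ext a
  rw [LinearMap.comp_apply, conv_repr _ _ (ℛ K a), conv_repr _ _ (ℛ K a)]
  simp

end ConvLibrary

section HopfLemmas

open TensorProduct LinearMap Coalgebra

variable (δ : H →ₐ[k] k)

/-- the δ-unit of the convolution algebra `Hom(H, C)` -/
noncomputable def udel (C : Type*) [Semiring C] [Algebra k C] : H →ₗ[k] C :=
  Algebra.linearMap k C ∘ₗ δ.toLinearMap

lemma udel_apply (C : Type*) [Semiring C] [Algebra k C] (a : H) :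
    udel k H δ C a = δ a • (1 : C) := by
  simp [udel, Algebra.smul_def]

lemma conv_antipode_id :
    conv (HopfAlgebra.antipode (R := k) (A := H)) LinearMap.id = cunit :=
  HopfAlgebra.mul_antipode_rTensor_comul

lemma twistedAntipode_eq_conv :
    twistedAntipode k H δ = conv (udel k H δ H) (HopfAlgebra.antipode (R := k)) := by
  ext a
  rw [conv_repr _ _ (ℛ k a), twistedAntipode]
  simp only [LinearMap.comp_apply, ← (ℛ k a).eq, map_sum, TensorProduct.map_tmul,
    LinearEquiv.coe_coe, TensorProduct.lid_tmul, udel_apply, smul_mul_assoc, one_mul,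
    AlgHom.toLinearMap_apply]

lemma conv_twisted_id :
    conv (twistedAntipode k H δ) LinearMap.id = udel k H δ H := by
  rw [twistedAntipode_eq_conv, conv_assoc, conv_antipode_id, conv_cunit_right]

noncomputable def inc₁ : H →ₗ[k] H ⊗[k] H := (TensorProduct.mk k H H).flip 1
noncomputable def inc₂ : H →ₗ[k] H ⊗[k] H := TensorProduct.mk k H H 1

@[simp] lemma inc₁_apply (a : H) : inc₁ k H a = a ⊗ₜ[k] 1 := rfl
@[simp] lemma inc₂_apply (a : H) : inc₂ k H a = 1 ⊗ₜ[k] a := rfl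

lemma conv_inc₁_inc₂ : conv (inc₁ k H) (inc₂ k H) = (Coalgebra.comul : H →ₗ[k] H ⊗[k] H) := by
  ext a
  rw [conv_repr _ _ (ℛ k a), ← (ℛ k a).eq]
  simp [Algebra.TensorProduct.tmul_mul_tmul]

lemma conv_inc₂_inc₂S :
    conv (inc₂ k H) (inc₂ k H ∘ₗ HopfAlgebra.antipode (R := k) (A := H)) = cunit := by
  ext a
  rw [conv_repr _ _ (ℛ k a), cunit_apply]
  simp only [inc₂_apply, LinearMap.comp_apply,
    Algebra.TensorProduct.tmul_mul_tmul, one_mul]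
  rw [← TensorProduct.tmul_sum, HopfAlgebra.sum_mul_antipode_eq_smul (ℛ k a)]
  rw [Algebra.TensorProduct.one_def, TensorProduct.tmul_smul]

lemma comul_comp_udel :
    Coalgebra.comul ∘ₗ udel k H δ H = udel k H δ (H ⊗[k] H) := by
  ext a
  simp [udel_apply, Bialgebra.comul_one, Algebra.TensorProduct.one_def]

lemma inc₂_comp_udel :
    inc₂ k H ∘ₗ udel k H δ H = udel k H δ (H ⊗[k] H) := by
  ext a
  simp [udel_apply, Algebra.TensorProduct.one_def, TensorProduct.tmul_smul]

lemma inc₂_eq_includeRight :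
    inc₂ k H
      = (Algebra.TensorProduct.includeRight : H →ₐ[k] H ⊗[k] H).toLinearMap := rfl

/-- the key identity `Σ Δ(S̃(h₁)) · (h₂ ⊗ 1) = 1 ⊗ S̃ h`. -/
lemma keyE :
    conv (Coalgebra.comul ∘ₗ twistedAntipode k H δ) (inc₁ k H)
      = inc₂ k H ∘ₗ twistedAntipode k H δ := by
  set A := conv (Coalgebra.comul ∘ₗ twistedAntipode k H δ) (inc₁ k H) with hA
  have hcm : (Coalgebra.comul : H →ₗ[k] H ⊗[k] H)
      = (Bialgebra.comulAlgHom k H).toLinearMap := rfl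
  have step1 : conv A (inc₂ k H) = udel k H δ (H ⊗[k] H) := by
    rw [hA, conv_assoc, conv_inc₁_inc₂]
    have h2 := algHom_comp_conv (Bialgebra.comulAlgHom k H)
      (twistedAntipode k H δ) (LinearMap.id (R := k) (M := H))
    rw [LinearMap.comp_id] at h2
    rw [hcm, ← h2, conv_twisted_id, ← hcm, comul_comp_udel]
  calc A = conv A cunit := (conv_cunit_right A).symm
    _ = conv A (conv (inc₂ k H) (inc₂ k H ∘ₗ HopfAlgebra.antipode (R := k) (A := H))) := by
        rw [conv_inc₂_inc₂S]
    _ = conv (conv A (inc₂ k H)) (inc₂ k H ∘ₗ HopfAlgebra.antipode (R := k) (A := H)) := by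
        rw [← conv_assoc]
    _ = conv (inc₂ k H ∘ₗ udel k H δ H)
          (inc₂ k H ∘ₗ HopfAlgebra.antipode (R := k) (A := H)) := by
        rw [step1, inc₂_comp_udel]
    _ = inc₂ k H ∘ₗ conv (udel k H δ H) (HopfAlgebra.antipode (R := k)) := by
        rw [inc₂_eq_includeRight, ← algHom_comp_conv]
    _ = inc₂ k H ∘ₗ twistedAntipode k H δ := by
        rw [← twistedAntipode_eq_conv]

/-- repr form of the key identity -/
lemma keyE_repr {ι : Type*} {a : H} (r : Coalgebra.Repr k a ι) :
    ∑ i ∈ r.index, Coalgebra.comul (R := k) (twistedAntipode k H δ (r.left i))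
        * (r.right i ⊗ₜ[k] (1 : H))
      = (1 : H) ⊗ₜ[k] twistedAntipode k H δ a := by
  have := congr($(keyE k H δ) a)
  rw [conv_repr _ _ r] at this
  simpa using this

end HopfLemmas

section TpowLemmas

open TensorProduct LinearMap Coalgebra

variable (δ : H →ₐ[k] k) (σ : H)

/-- pure-tensor constructor for `Tpow` -/
noncomputable def tp (n : ℕ) (a : H) (x : Tpow k H n) : Tpow k H (n + 1) :=
  (a ⊗ₜ[k] x : H ⊗[k] Tpow k H n)

lemma tpow_ext {n : ℕ} {P : Type*} [AddCommMonoid P] [Module k P]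
    {f g : Tpow k H (n + 1) →ₗ[k] P}
    (h : ∀ (a : H) (x : Tpow k H n), f (tp k H n a x) = g (tp k H n a x)) : f = g :=
  TensorProduct.ext' (M := H) (N := Tpow k H n) h

lemma tpow_induction {n : ℕ} {motive : Tpow k H (n + 1) → Prop}
    (zero : motive 0)
    (tmul : ∀ a x, motive (tp k H n a x))
    (add : ∀ u v, motive u → motive v → motive (u + v)) (u : Tpow k H (n + 1)) : motive u :=
  TensorProduct.induction_on (R := k) (M := H) (N := Tpow k H n) u zero tmul add

lemma tpow_zero_ext {P : Type*} [AddCommMonoid P] [Module k P]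
    {f g : Tpow k H 0 →ₗ[k] P}
    (h : f (1 : Tpow k H 0) = g (1 : Tpow k H 0)) : f = g :=
  LinearMap.ext_ring (R := k) h

lemma tp_mul (n : ℕ) (a b : H) (x y : Tpow k H n) :
    tp k H n a x * tp k H n b y = tp k H n (a * b) (x * y) :=
  Algebra.TensorProduct.tmul_mul_tmul a b x y

lemma cyc_tp (n : ℕ) (a : H) (x : Tpow k H n) :
    cyc k H δ σ (n + 1) (tp k H n a x)
      = iterComul k H n (twistedAntipode k H δ a) * appendEnd k H σ n x := rfl

lemma append_tp (n : ℕ) (a : H) (x : Tpow k H n) :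
    appendEnd k H σ (n + 1) (tp k H n a x) = tp k H (n + 1) a (appendEnd k H σ n x) := rfl

lemma face0_tp (n : ℕ) (x : Tpow k H n) :
    face k H σ n 0 x = tp k H n 1 x := by cases n <;> rfl

lemma face_succsucc_tp (m i : ℕ) (a : H) (x : Tpow k H m) :
    face k H σ (m + 1) (i + 2) (tp k H m a x)
      = tp k H (m + 1) a (face k H σ m (i + 1) x) := rfl

/-- `tq n z x = assoc (z ⊗ₜ x)` -/
noncomputable def tq (n : ℕ) (z : H ⊗[k] H) (x : Tpow k H n) : Tpow k H (n + 1 + 1) :=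
  (TensorProduct.assoc k H H (Tpow k H n)).toLinearMap (z ⊗ₜ[k] x)

lemma tq_tmul (n : ℕ) (a b : H) (x : Tpow k H n) :
    tq k H n (a ⊗ₜ[k] b) x = tp k H (n + 1) a (tp k H n b x) := rfl

@[simp] lemma tq_zero (n : ℕ) (x : Tpow k H n) : tq k H n 0 x = 0 := by
  unfold tq
  rw [TensorProduct.zero_tmul, map_zero]
  rfl

@[simp] lemma tq_add (n : ℕ) (z w : H ⊗[k] H) (x : Tpow k H n) :
    tq k H n (z + w) x = tq k H n z x + tq k H n w x := by
  unfold tq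
  rw [TensorProduct.add_tmul, map_add]
  rfl

lemma tq_sum {ι : Type*} (n : ℕ) (s : Finset ι) (f : ι → H ⊗[k] H) (x : Tpow k H n) :
    tq k H n (∑ i ∈ s, f i) x = ∑ i ∈ s, tq k H n (f i) x := by
  classical
  induction s using Finset.induction_on with
  | empty => simp
  | insert _ _ hni ih => rw [Finset.sum_insert hni, Finset.sum_insert hni, tq_add, ih]

lemma tq_mul (n : ℕ) (z w : H ⊗[k] H) (x y : Tpow k H n) :
    tq k H n (z * w) (x * y) = tq k H n z x * tq k H n w y := by
  induction z using TensorProduct.induction_on with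
  | zero => simp [zero_mul]
  | add u v hu hv => simp [add_mul, hu, hv]
  | tmul a b =>
    induction w using TensorProduct.induction_on with
    | zero => simp [mul_zero]
    | add u v hu hv => simp [mul_add, hu, hv]
    | tmul c d =>
      rw [Algebra.TensorProduct.tmul_mul_tmul, tq_tmul, tq_tmul, tq_tmul,
        tp_mul, ← tp_mul, ← tp_mul]

lemma face1_tq (n : ℕ) (a : H) (x : Tpow k H n) :
    face k H σ (n + 1) 1 (tp k H n a x) = tq k H n (Coalgebra.comul (R := k) a) x := rfl

lemma face1_tp (n : ℕ) (a : H) (x : Tpow k H n) {ι : Type*} (r : Coalgebra.Repr k a ι) :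
    face k H σ (n + 1) 1 (tp k H n a x)
      = ∑ i ∈ r.index, tp k H (n + 1) (r.left i) (tp k H n (r.right i) x) := by
  rw [face1_tq, ← r.eq, tq_sum]
  exact Finset.sum_congr rfl fun i _ => tq_tmul k H n _ _ x

lemma iterComul_zero_tp (a : H) :
    iterComul k H 0 a = tp k H 0 a (1 : Tpow k H 0) := rfl

/-- `mic n u = (id ⊗ iterComul n) u`, valued in `Tpow (n+2)`. -/
noncomputable def mic (n : ℕ) (u : H ⊗[k] H) : Tpow k H (n + 1 + 1) :=
  TensorProduct.map LinearMap.id (iterComul k H n) u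

lemma mic_tmul (n : ℕ) (p q : H) :
    mic k H n (p ⊗ₜ[k] q) = tp k H (n + 1) p (iterComul k H n q) := rfl

@[simp] lemma mic_zero (n : ℕ) : mic k H n 0 = 0 := by
  unfold mic; rw [map_zero]; rfl

@[simp] lemma mic_add (n : ℕ) (u v : H ⊗[k] H) :
    mic k H n (u + v) = mic k H n u + mic k H n v := by
  unfold mic; rw [map_add]; rfl

lemma iterComul_succ (n : ℕ) (a : H) :
    iterComul k H (n + 1) a = mic k H n (Coalgebra.comul (R := k) a) := rfl

lemma face_zero_succ (i : ℕ) :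
    face k H σ 0 (i + 1) ((1 : Tpow k H 0)) = tp k H 0 σ (1 : Tpow k H 0) :=
  LinearMap.toSpanSingleton_apply_one k (H ⊗[k] k) (σ ⊗ₜ[k] (1 : k))

lemma append_zero : appendEnd k H σ 0 ((1 : Tpow k H 0)) = tp k H 0 σ (1 : Tpow k H 0) :=
  LinearMap.toSpanSingleton_apply_one k (H ⊗[k] k) (σ ⊗ₜ[k] (1 : k))

/-- Lemma A: the append map commutes with the faces. -/
lemma append_face (hgl : Coalgebra.comul (R := k) σ = σ ⊗ₜ[k] σ) :
    ∀ n i, 1 ≤ i →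
      appendEnd k H σ (n + 1) ∘ₗ face k H σ n i
        = face k H σ (n + 1) i ∘ₗ appendEnd k H σ n := by
  have face0succ := face_zero_succ k H σ
  have append0 := append_zero k H σ
  intro n
  induction n with
  | zero =>
    intro i hi
    obtain ⟨i₀, rfl⟩ : ∃ i₀, i = i₀ + 1 := ⟨i - 1, by omega⟩
    apply tpow_zero_ext k H
    rw [LinearMap.comp_apply, LinearMap.comp_apply, face0succ, append_tp, append0]
    rcases i₀ with _ | j
    · rw [face1_tq, hgl, tq_tmul]
    · rw [face_succsucc_tp, face0succ]
  | succ m ih =>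
    intro i hi
    obtain ⟨i₀, rfl⟩ : ∃ i₀, i = i₀ + 1 := ⟨i - 1, by omega⟩
    apply tpow_ext
    intro a x
    rcases i₀ with _ | j
    · rw [LinearMap.comp_apply, LinearMap.comp_apply,
        face1_tp k H σ m a x (ℛ k a), map_sum, append_tp,
        face1_tp k H σ (m + 1) a (appendEnd k H σ m x) (ℛ k a)]
      exact Finset.sum_congr rfl fun i _ => by rw [append_tp, append_tp]
    · have hih := congr($(ih (j + 1) (by omega)) x)
      rw [LinearMap.comp_apply] at hih
      rw [LinearMap.comp_apply] at hih
      rw [LinearMap.comp_apply, LinearMap.comp_apply, face_succsucc_tp, append_tp,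
        append_tp, face_succsucc_tp, hih]

/-- Lemma C1, j = 1 : the first comultiplication face is multiplicative. -/
lemma face_one_mul (n : ℕ) (u v : Tpow k H (n + 1)) :
    face k H σ (n + 1) 1 (u * v) = face k H σ (n + 1) 1 u * face k H σ (n + 1) 1 v := by
  induction u using tpow_induction with
  | zero => rw [zero_mul, map_zero, zero_mul]
  | add u₁ u₂ h1 h2 => rw [add_mul, map_add, h1, h2, map_add, add_mul]
  | tmul a x =>
    induction v using tpow_induction with
    | zero => rw [mul_zero, map_zero, mul_zero]
    | add v₁ v₂ h1 h2 => rw [mul_add, map_add, h1, h2, map_add, mul_add]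
    | tmul b y =>
      rw [tp_mul, face1_tq, face1_tq, face1_tq, Bialgebra.comul_mul, tq_mul]

/-- Lemma C1 : the comultiplication faces are multiplicative. -/
lemma face_mul : ∀ n j, 1 ≤ j → j ≤ n + 1 → ∀ u v : Tpow k H (n + 1),
    face k H σ (n + 1) j (u * v)
      = face k H σ (n + 1) j u * face k H σ (n + 1) j v := by
  intro n
  induction n with
  | zero =>
    intro j h1 h2 u v
    obtain rfl : j = 1 := by omega
    exact face_one_mul k H σ 0 u v
  | succ m ih =>
    intro j h1 h2 u v
    rcases j with _ | j₀
    · omega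
    rcases j₀ with _ | j'
    · exact face_one_mul k H σ (m + 1) u v
    induction u using tpow_induction with
    | zero => rw [zero_mul, map_zero, zero_mul]
    | add u₁ u₂ hu1 hu2 => rw [add_mul, map_add, hu1, hu2, map_add, add_mul]
    | tmul a x =>
      induction v using tpow_induction with
      | zero => rw [mul_zero, map_zero, mul_zero]
      | add v₁ v₂ hv1 hv2 => rw [mul_add, map_add, hv1, hv2, map_add, mul_add]
      | tmul b y =>
        rw [tp_mul, face_succsucc_tp, face_succsucc_tp, face_succsucc_tp,
          ih (j' + 1) (by omega) (by omega) x y, tp_mul]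

/-- Lemma C2 : composing a comultiplication face with the iterated comultiplication. -/
lemma face_iterComul : ∀ n j, 1 ≤ j → j ≤ n + 1 →
    face k H σ (n + 1) j ∘ₗ iterComul k H n = iterComul k H (n + 1) := by
  intro n
  induction n with
  | zero =>
    intro j h1 h2
    obtain rfl : j = 1 := by omega
    apply LinearMap.ext
    intro a
    rw [LinearMap.comp_apply, iterComul_zero_tp, face1_tq, iterComul_succ]
    generalize Coalgebra.comul (R := k) a = z
    induction z using TensorProduct.induction_on with
    | zero => rw [tq_zero, mic_zero]
    | tmul c d => rw [tq_tmul, mic_tmul]; rfl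
    | add z w hz hw => rw [tq_add, mic_add, hz, hw]
  | succ m ih =>
    intro j h1 h2
    rcases j with _ | j₀
    · omega
    rcases j₀ with _ | j'
    · -- j = 1
      apply LinearMap.ext
      intro a
      have hco : (TensorProduct.assoc k H H H).toLinearMap
            ((Coalgebra.comul (R := k)).rTensor H (Coalgebra.comul (R := k) a))
          = (Coalgebra.comul (R := k)).lTensor H (Coalgebra.comul (R := k) a) :=
        Coalgebra.coassoc_apply a
      have t1 : ∀ z : H ⊗[k] H,
          face k H σ (m + 1 + 1) 1 (mic k H m z)
            = TensorProduct.map LinearMap.id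
                (TensorProduct.map LinearMap.id (iterComul k H m))
                ((TensorProduct.assoc k H H H).toLinearMap
                  ((Coalgebra.comul (R := k)).rTensor H z)) := by
        intro z
        induction z using TensorProduct.induction_on with
        | zero => rw [mic_zero, map_zero, map_zero, map_zero, map_zero]; rfl
        | add z w hz hw => rw [mic_add, map_add, map_add, map_add, map_add, hz, hw]; rfl
        | tmul p q =>
          rw [mic_tmul, face1_tq, LinearMap.rTensor_tmul]
          generalize Coalgebra.comul (R := k) p = w
          induction w using TensorProduct.induction_on with
          | zero => rw [tq_zero, TensorProduct.zero_tmul, map_zero, map_zero]; rfl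
          | add w₁ w₂ hw₁ hw₂ =>
            rw [tq_add, TensorProduct.add_tmul, map_add, map_add, hw₁, hw₂]; rfl
          | tmul c d => rw [tq_tmul]; rfl
      have t2 : ∀ z : H ⊗[k] H,
          TensorProduct.map LinearMap.id (TensorProduct.map LinearMap.id (iterComul k H m))
              ((Coalgebra.comul (R := k)).lTensor H z)
            = mic k H (m + 1) z := by
        intro z
        induction z using TensorProduct.induction_on with
        | zero => rw [map_zero, map_zero, mic_zero]; rfl
        | add z w hz hw => rw [map_add, map_add, mic_add, hz, hw]; rfl
        | tmul p q => rfl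
      rw [LinearMap.comp_apply, iterComul_succ, t1, hco, t2]
      exact (iterComul_succ k H (m + 1) a).symm
    · -- j = j' + 2
      apply LinearMap.ext
      intro a
      rw [LinearMap.comp_apply, iterComul_succ, iterComul_succ]
      generalize Coalgebra.comul (R := k) a = z
      induction z using TensorProduct.induction_on with
      | zero => rw [mic_zero, map_zero, mic_zero]
      | add z w hz hw => rw [mic_add, map_add, mic_add, hz, hw]
      | tmul p q =>
        have hih := congr($(ih (j' + 1) (by omega) (by omega)) q)
        rw [LinearMap.comp_apply] at hih
        rw [mic_tmul, face_succsucc_tp, hih]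
        exact (mic_tmul k H (m + 1) p q).symm

/-- `phiD n y u = (id ⊗ (·* y) ∘ iterComul n) u`, valued in `Tpow (n+2)`. -/
noncomputable def phiD (n : ℕ) (y : Tpow k H (n + 1)) (u : H ⊗[k] H) :
    Tpow k H (n + 1 + 1) :=
  TensorProduct.map LinearMap.id (LinearMap.mulRight k y ∘ₗ iterComul k H n) u

lemma phiD_tmul (n : ℕ) (y : Tpow k H (n + 1)) (p q : H) :
    phiD k H n y (p ⊗ₜ[k] q) = tp k H (n + 1) p (iterComul k H n q * y) := rfl

@[simp] lemma phiD_zero (n : ℕ) (y : Tpow k H (n + 1)) : phiD k H n y 0 = 0 := by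
  unfold phiD; rw [map_zero]; rfl

lemma phiD_sum {ι : Type*} (n : ℕ) (y : Tpow k H (n + 1)) (s : Finset ι)
    (f : ι → H ⊗[k] H) :
    phiD k H n y (∑ i ∈ s, f i) = ∑ i ∈ s, phiD k H n y (f i) := by
  unfold phiD; rw [map_sum]; rfl

/-- Lemma D -/
lemma keyD (δ : H →ₐ[k] k) (n : ℕ) {a : H} {ι : Type*} (r : Coalgebra.Repr k a ι) (y : Tpow k H (n + 1)) :
    ∑ i ∈ r.index, iterComul k H (n + 1) (twistedAntipode k H δ (r.left i))
        * tp k H (n + 1) (r.right i) y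
      = tp k H (n + 1) 1 (iterComul k H n (twistedAntipode k H δ a) * y) := by
  have claim : ∀ (u : H ⊗[k] H) (c : H),
      mic k H n u * tp k H (n + 1) c y = phiD k H n y (u * c ⊗ₜ[k] (1 : H)) := by
    intro u c
    induction u using TensorProduct.induction_on with
    | zero => rw [mic_zero, zero_mul, zero_mul, phiD_zero]
    | add u v hu hv =>
      rw [mic_add, add_mul, add_mul, hu, hv]
      unfold phiD
      rw [map_add]
      rfl
    | tmul p q =>
      rw [Algebra.TensorProduct.tmul_mul_tmul, mul_one, mic_tmul, tp_mul, phiD_tmul]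
  calc ∑ i ∈ r.index, iterComul k H (n + 1) (twistedAntipode k H δ (r.left i))
        * tp k H (n + 1) (r.right i) y
      = ∑ i ∈ r.index,
          phiD k H n y (Coalgebra.comul (R := k) (twistedAntipode k H δ (r.left i))
            * r.right i ⊗ₜ[k] (1 : H)) := by
        refine Finset.sum_congr rfl fun i _ => ?_
        rw [iterComul_succ, claim]
    _ = phiD k H n y (∑ i ∈ r.index,
          Coalgebra.comul (R := k) (twistedAntipode k H δ (r.left i))
            * r.right i ⊗ₜ[k] (1 : H)) := by
        rw [phiD_sum]
    _ = phiD k H n y ((1 : H) ⊗ₜ[k] twistedAntipode k H δ a) := by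
        rw [keyE_repr k H δ r]
    _ = tp k H (n + 1) 1 (iterComul k H n (twistedAntipode k H δ a) * y) := by
        rw [phiD_tmul]

end TpowLemmas

/-- If the modular pair `(δ, σ)` is in involution, then for every `n ≥ 1`
(written `n = m + 1`) and every `1 ≤ i ≤ n`, the cyclic and face operators satisfy
`τₙ ∘ δᵢ = δᵢ₋₁ ∘ τₙ₋₁` as maps `H^{⊗(n-1)} → H^{⊗n}`. -/
theorem cyc_comp_face (δ : H →ₐ[k] k) (σ σ' : H)
    (hgrouplike : Coalgebra.comul (R := k) σ = σ ⊗ₜ[k] σ)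
    (hcounit : Coalgebra.counit (R := k) σ = 1)
    (hinv : σ * σ' = 1) (hinv' : σ' * σ = 1)
    (hmodular : δ σ = 1)
    (hinvolution : ∀ h : H,
      σ' * twistedAntipode k H δ (σ' * twistedAntipode k H δ h) = h)
    (m : ℕ) (i : ℕ) (hi1 : 1 ≤ i) (hi2 : i ≤ m + 1) :
    cyc k H δ σ (m + 1) ∘ₗ face k H σ m i
      = face k H σ m (i - 1) ∘ₗ cyc k H δ σ m := by
  rcases i with _ | i₀
  · omega
  simp only [Nat.add_sub_cancel]
  rcases i₀ with _ | j
  · -- the case i = 1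
    rcases m with _ | m'
    · -- base case m = 0
      have hss : twistedAntipode k H δ σ * σ = 1 := by
        have h1 : twistedAntipode k H δ σ = HopfAlgebra.antipode (R := k) σ := by
          rw [twistedAntipode]
          simp only [LinearMap.comp_apply, hgrouplike, TensorProduct.map_tmul,
            LinearEquiv.coe_coe, TensorProduct.lid_tmul, AlgHom.toLinearMap_apply, hmodular,
            one_smul]
        have h2 := HopfAlgebra.mul_antipode_rTensor_comul_apply (R := k) (A := H) σ
        rw [hgrouplike, hcounit] at h2
        rw [h1]
        simpa using h2
      apply tpow_zero_ext k H
      rw [LinearMap.comp_apply, LinearMap.comp_apply]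
      have ec : cyc k H δ σ 0 (1 : Tpow k H 0) = (1 : Tpow k H 0) := rfl
      rw [face_zero_succ, cyc_tp, iterComul_zero_tp, append_zero, tp_mul, hss, one_mul,
        ec, face0_tp]
    · -- the case i = 1, m = m' + 1
      apply tpow_ext k H
      intro a x
      rw [LinearMap.comp_apply, LinearMap.comp_apply,
        face1_tp k H σ m' a x (Coalgebra.Repr.arbitrary k a), map_sum]
      simp only [cyc_tp, append_tp, face0_tp]
      exact keyD k H δ m' (Coalgebra.Repr.arbitrary k a) (appendEnd k H σ m' x)
  · -- the case i = j + 2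
    rcases m with _ | m'
    · omega
    · apply tpow_ext k H
      intro a x
      rw [LinearMap.comp_apply, LinearMap.comp_apply, face_succsucc_tp, cyc_tp, cyc_tp]
      have hA := congr($(append_face k H σ hgrouplike m' (j + 1) (by omega)) x)
      rw [LinearMap.comp_apply] at hA
      rw [LinearMap.comp_apply] at hA
      have hC2 := congr($(face_iterComul k H σ m' (j + 1) (by omega) (by omega))
        (twistedAntipode k H δ a))
      rw [LinearMap.comp_apply] at hC2
      rw [hA, face_mul k H σ m' (j + 1) (by omega) (by omega), hC2]
end

section
/- If the modular pair (δ,σ) is in involution, then for every n ≥ 1 the cyclic and degeneracy operators satisfy τₙ ∘ σ₀ = σₙ ∘ τₙ₊₁² as maps H^{⊗(n+1)} → H^{⊗n}. -/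
open scoped TensorProduct

variable (k H : Type) [Field k] [Ring H] [HopfAlgebra k H]

/-- The degeneracy operators `σᵢ : H^{⊗(n+1)} → H^{⊗n}` (for `0 ≤ i ≤ n`), applying
the counit `ε` to the `(i+1)`-st tensor factor. -/
noncomputable def degen : (n i : ℕ) → Tpow k H (n + 1) →ₗ[k] Tpow k H n
  | n, 0 =>
    ((TensorProduct.lid k (Tpow k H n)).toLinearMap
        ∘ₗ TensorProduct.map Coalgebra.counit LinearMap.id :
      H ⊗[k] Tpow k H n →ₗ[k] Tpow k H n)
  | 0, _ + 1 =>
    ((TensorProduct.lid k (Tpow k H 0)).toLinearMap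
        ∘ₗ TensorProduct.map Coalgebra.counit LinearMap.id :
      H ⊗[k] Tpow k H 0 →ₗ[k] Tpow k H 0)
  | n + 1, i + 1 =>
    (TensorProduct.map LinearMap.id (degen n i) :
      H ⊗[k] Tpow k H (n + 1) →ₗ[k] H ⊗[k] Tpow k H n)

open Coalgebra HopfAlgebra

namespace CyclicAux

variable {k H}

section Conv

variable {C A' : Type} [AddCommGroup C] [Module k C] [Coalgebra k C]
  [Ring A'] [Algebra k A']

/-- Convolution product on linear maps from a coalgebra to an algebra. -/
noncomputable def lconv (f g : C →ₗ[k] A') : C →ₗ[k] A' :=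
  LinearMap.mul' k A' ∘ₗ TensorProduct.map f g ∘ₗ Coalgebra.comul

lemma lconv_repr (f g : C →ₗ[k] A') {ι : Type*} {c : C} (r : Coalgebra.Repr k c ι) :
    lconv f g c = ∑ i ∈ r.index, f (r.left i) * g (r.right i) := by
  simp only [lconv, LinearMap.comp_apply, ← r.eq, map_sum, TensorProduct.map_tmul,
    LinearMap.mul'_apply]

/-- The unit for convolution. -/
noncomputable def cunit : C →ₗ[k] A' := Algebra.linearMap k A' ∘ₗ Coalgebra.counit

lemma cunit_apply (c : C) :
    cunit (k := k) (A' := A') c = algebraMap k A' (Coalgebra.counit (R := k) c) := rfl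

lemma sum_counit_smul_left {ι : Type*} {c : C} (r : Coalgebra.Repr k c ι) :
    ∑ i ∈ r.index, Coalgebra.counit (R := k) (r.left i) • r.right i = c := by
  have := congrArg (TensorProduct.lid k C) (Coalgebra.sum_counit_tmul_eq r)
  simpa only [map_sum, TensorProduct.lid_tmul, one_smul] using this

lemma sum_counit_smul_right {ι : Type*} {c : C} (r : Coalgebra.Repr k c ι) :
    ∑ i ∈ r.index, Coalgebra.counit (R := k) (r.right i) • r.left i = c := by
  have := congrArg (TensorProduct.rid k C) (Coalgebra.sum_tmul_counit_eq r)
  simpa only [map_sum, TensorProduct.rid_tmul, one_smul] using this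

lemma lconv_cunit_right (f : C →ₗ[k] A') : lconv f cunit = f := by
  ext c
  rw [lconv_repr f cunit (ℛ k c)]
  simp_rw [cunit_apply, ← Algebra.commutes, ← Algebra.smul_def, ← map_smul, ← map_sum,
    sum_counit_smul_right]

lemma lconv_cunit_left (f : C →ₗ[k] A') : lconv cunit f = f := by
  ext c
  rw [lconv_repr cunit f (ℛ k c)]
  simp_rw [cunit_apply, ← Algebra.smul_def, ← map_smul, ← map_sum, sum_counit_smul_left]

lemma lconv_assoc (f g h : C →ₗ[k] A') : lconv (lconv f g) h = lconv f (lconv g h) := by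
  ext c
  set r := ℛ k c with hr
  set r₁ : ∀ i : r.ι, Coalgebra.Repr k (r.left i) (C × C) := fun i => ℛ k (r.left i) with hr₁
  set r₂ : ∀ i : r.ι, Coalgebra.Repr k (r.right i) (C × C) := fun i => ℛ k (r.right i) with hr₂
  have key := Coalgebra.sum_tmul_tmul_eq r r₁ r₂
  set T : C ⊗[k] (C ⊗[k] C) →ₗ[k] A' :=
    LinearMap.mul' k A' ∘ₗ TensorProduct.map f
      (LinearMap.mul' k A' ∘ₗ TensorProduct.map g h) with hT
  have keyT := congrArg T key
  have hTval : ∀ (x y z : C), T (x ⊗ₜ[k] (y ⊗ₜ[k] z)) = f x * (g y * h z) := by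
    intro x y z
    simp [hT]
  simp only [map_sum, hTval] at keyT
  calc (lconv (lconv f g) h) c
      = ∑ i ∈ r.index, ∑ j ∈ (r₁ i).index,
          f ((r₁ i).left j) * (g ((r₁ i).right j) * h (r.right i)) := by
        rw [lconv_repr _ _ r]
        refine Finset.sum_congr rfl fun i _ => ?_
        rw [lconv_repr _ _ (r₁ i), Finset.sum_mul]
        exact Finset.sum_congr rfl fun j _ => mul_assoc _ _ _
    _ = ∑ i ∈ r.index, ∑ j ∈ (r₂ i).index,
          f (r.left i) * (g ((r₂ i).left j) * h ((r₂ i).right j)) := keyT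
    _ = (lconv f (lconv g h)) c := by
        rw [lconv_repr _ _ r]
        refine (Finset.sum_congr rfl fun i _ => ?_).symm
        rw [lconv_repr _ _ (r₂ i), Finset.mul_sum]

lemma lconv_unique {f m g : C →ₗ[k] A'} (h1 : lconv f m = cunit) (h2 : lconv m g = cunit) :
    f = g := by
  rw [← lconv_cunit_right f, ← h2, ← lconv_assoc, h1, lconv_cunit_left]

end Conv

end CyclicAux
namespace CyclicAux

variable {k H}

section Antipode

open TensorProduct

example (a b : H) : Coalgebra.comul (R := k) (a ⊗ₜ[k] b : H ⊗[k] H)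
    = TensorProduct.tensorTensorTensorComm k H H H H
        (Coalgebra.comul (R := k) a ⊗ₜ[k] Coalgebra.comul (R := k) b) := rfl

example (a b : H) : Coalgebra.counit (R := k) (a ⊗ₜ[k] b : H ⊗[k] H)
    = Coalgebra.counit (R := k) a * Coalgebra.counit (R := k) b := by
  rw [TensorProduct.counit_tmul, smul_eq_mul, mul_comm]

/-- Representation of the comultiplication of a pure tensor. -/
noncomputable def tmulRepr {ι κ : Type*} {a b : H} (ra : Coalgebra.Repr k a ι) (rb : Coalgebra.Repr k b κ) :
    Coalgebra.Repr k (a ⊗ₜ[k] b : H ⊗[k] H) (ι × κ) where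
  index := ra.index ×ˢ rb.index
  left := fun p => ra.left p.1 ⊗ₜ[k] rb.left p.2
  right := fun p => ra.right p.1 ⊗ₜ[k] rb.right p.2
  eq := by
    have : Coalgebra.comul (R := k) (a ⊗ₜ[k] b : H ⊗[k] H)
        = TensorProduct.tensorTensorTensorComm k H H H H
            (Coalgebra.comul (R := k) a ⊗ₜ[k] Coalgebra.comul (R := k) b) := rfl
    rw [this, ← ra.eq, ← rb.eq, Finset.sum_product]
    simp only [TensorProduct.tmul_sum, TensorProduct.sum_tmul, map_sum,
      TensorProduct.tensorTensorTensorComm_tmul]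
    exact Finset.sum_comm

/-- Representation of the comultiplication of a product. -/
noncomputable def mulRepr {ι κ : Type*} {a b : H} (ra : Coalgebra.Repr k a ι) (rb : Coalgebra.Repr k b κ) :
    Coalgebra.Repr k (a * b) (ι × κ) where
  index := ra.index ×ˢ rb.index
  left := fun p => ra.left p.1 * rb.left p.2
  right := fun p => ra.right p.1 * rb.right p.2
  eq := by
    rw [Finset.sum_product, Bialgebra.comul_mul, ← ra.eq, ← rb.eq, Finset.sum_mul_sum]
    simp [Algebra.TensorProduct.tmul_mul_tmul]

end Antipode

end CyclicAux
namespace CyclicAux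

variable {k H}

section Antipode2

open TensorProduct Coalgebra HopfAlgebra

lemma antipode_mul_anti (a b : H) :
    HopfAlgebra.antipode (R := k) (a * b)
      = HopfAlgebra.antipode (R := k) b * HopfAlgebra.antipode (R := k) (A := H) a := by
  have main : (HopfAlgebra.antipode (R := k) ∘ₗ LinearMap.mul' k H : H ⊗[k] H →ₗ[k] H)
      = LinearMap.mul' k H ∘ₗ TensorProduct.map (HopfAlgebra.antipode (R := k))
          (HopfAlgebra.antipode (R := k)) ∘ₗ (TensorProduct.comm k H H).toLinearMap := by
    refine lconv_unique (m := LinearMap.mul' k H) ?_ ?_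
    · apply TensorProduct.ext'
      intro a b
      rw [lconv_repr _ _ (tmulRepr (ℛ k a) (ℛ k b))]
      have h := HopfAlgebra.sum_antipode_mul_eq_algebraMap_counit (R := k) (mulRepr (ℛ k a) (ℛ k b))
      simp only [mulRepr] at h
      simp only [tmulRepr, LinearMap.comp_apply, LinearMap.mul'_apply]
      rw [h, Bialgebra.counit_mul]
      rw [cunit_apply, TensorProduct.counit_tmul, smul_eq_mul, mul_comm]
    · apply TensorProduct.ext'
      intro a b
      rw [lconv_repr _ _ (tmulRepr (ℛ k a) (ℛ k b))]
      simp only [tmulRepr, LinearMap.comp_apply, LinearMap.mul'_apply, LinearEquiv.coe_coe,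
        TensorProduct.comm_tmul, TensorProduct.map_tmul]
      rw [Finset.sum_product]
      have inner : ∀ i ∈ (ℛ k a).index,
          (∑ j ∈ (ℛ k b).index,
            (ℛ k a).left i * (ℛ k b).left j *
              (HopfAlgebra.antipode (R := k) ((ℛ k b).right j) *
                HopfAlgebra.antipode (R := k) ((ℛ k a).right i)))
          = Coalgebra.counit (R := k) b •
              ((ℛ k a).left i * HopfAlgebra.antipode (R := k) ((ℛ k a).right i)) := by
        intro i _
        have : ∀ j ∈ (ℛ k b).index,
            (ℛ k a).left i * (ℛ k b).left j *
              (HopfAlgebra.antipode (R := k) ((ℛ k b).right j) *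
                HopfAlgebra.antipode (R := k) ((ℛ k a).right i))
            = (ℛ k a).left i *
                (((ℛ k b).left j * HopfAlgebra.antipode (R := k) ((ℛ k b).right j)) *
                  HopfAlgebra.antipode (R := k) ((ℛ k a).right i)) := by
          intro j _
          simp only [mul_assoc]
        rw [Finset.sum_congr rfl this, ← Finset.mul_sum, ← Finset.sum_mul,
          HopfAlgebra.sum_mul_antipode_eq_algebraMap_counit (R := k) (ℛ k b), Algebra.smul_def,
          ← mul_assoc, ← Algebra.commutes, mul_assoc]
      rw [Finset.sum_congr rfl inner, ← Finset.smul_sum,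
        HopfAlgebra.sum_mul_antipode_eq_algebraMap_counit (R := k) (ℛ k a), Algebra.smul_def, ← map_mul,
        mul_comm (Coalgebra.counit (R := k) b)]
      rw [cunit_apply, TensorProduct.counit_tmul, smul_eq_mul, mul_comm]
  have := congrArg (fun φ : H ⊗[k] H →ₗ[k] H => φ (a ⊗ₜ[k] b)) main
  simpa only [LinearMap.comp_apply, LinearMap.mul'_apply, LinearEquiv.coe_coe,
    TensorProduct.comm_tmul, TensorProduct.map_tmul] using this

end Antipode2

end CyclicAux
namespace CyclicAux

variable {k H}

section Twisted

open TensorProduct Coalgebra HopfAlgebra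

variable (δ : H →ₐ[k] k)

lemma twistedAntipode_repr {ι : Type*} {a : H} (r : Coalgebra.Repr k a ι) :
    twistedAntipode k H δ a
      = ∑ i ∈ r.index, δ (r.left i) • HopfAlgebra.antipode (R := k) (r.right i) := by
  simp only [twistedAntipode, LinearMap.comp_apply, ← r.eq, map_sum, TensorProduct.map_tmul,
    LinearEquiv.coe_coe, TensorProduct.lid_tmul, AlgHom.toLinearMap_apply]

lemma twistedAntipode_mul (a b : H) :
    twistedAntipode k H δ (a * b) = twistedAntipode k H δ b * twistedAntipode k H δ a := by
  rw [twistedAntipode_repr δ (mulRepr (ℛ k a) (ℛ k b))]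
  simp only [mulRepr]
  rw [twistedAntipode_repr δ (ℛ k b), twistedAntipode_repr δ (ℛ k a), Finset.sum_mul_sum,
    Finset.sum_product, Finset.sum_comm]
  refine Finset.sum_congr rfl fun j _ => Finset.sum_congr rfl fun i _ => ?_
  rw [map_mul, antipode_mul_anti, smul_mul_assoc, mul_smul_comm, smul_smul,
    mul_comm (δ ((ℛ k b).left j)) (δ ((ℛ k a).left i))]

lemma delta_twistedAntipode (a : H) :
    δ (twistedAntipode k H δ a) = Coalgebra.counit (R := k) a := by
  rw [twistedAntipode_repr δ (ℛ k a), map_sum]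
  simp only [map_smul, smul_eq_mul, ← map_mul]
  rw [← map_sum, HopfAlgebra.sum_mul_antipode_eq_algebraMap_counit (R := k) (ℛ k a)]
  simp

lemma sum_twistedAntipode_mul {ι : Type*} {a : H} (r : Coalgebra.Repr k a ι) :
    ∑ i ∈ r.index, twistedAntipode k H δ (r.left i) * r.right i = δ a • (1 : H) := by
  set r₁ : ∀ i : r.ι, Coalgebra.Repr k (r.left i) (H × H) := fun i => ℛ k (r.left i) with hr₁
  set r₂ : ∀ i : r.ι, Coalgebra.Repr k (r.right i) (H × H) := fun i => ℛ k (r.right i) with hr₂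
  have key := Coalgebra.sum_tmul_tmul_eq r r₁ r₂
  set T : H ⊗[k] (H ⊗[k] H) →ₗ[k] H :=
    (TensorProduct.lid k H).toLinearMap ∘ₗ TensorProduct.map δ.toLinearMap
      (LinearMap.mul' k H ∘ₗ TensorProduct.map (HopfAlgebra.antipode (R := k)) LinearMap.id)
    with hT
  have hTval : ∀ x y z : H,
      T (x ⊗ₜ[k] (y ⊗ₜ[k] z)) = δ x • (HopfAlgebra.antipode (R := k) y * z) := by
    intro x y z; simp [hT]
  have keyT := congrArg T key
  simp only [map_sum, hTval] at keyT
  calc ∑ i ∈ r.index, twistedAntipode k H δ (r.left i) * r.right i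
      = ∑ i ∈ r.index, ∑ j ∈ (r₁ i).index,
          δ ((r₁ i).left j) • (HopfAlgebra.antipode (R := k) ((r₁ i).right j) * r.right i) := by
        refine Finset.sum_congr rfl fun i _ => ?_
        rw [twistedAntipode_repr δ (r₁ i), Finset.sum_mul]
        exact Finset.sum_congr rfl fun j _ => smul_mul_assoc _ _ _
    _ = ∑ i ∈ r.index, ∑ j ∈ (r₂ i).index,
          δ (r.left i) • (HopfAlgebra.antipode (R := k) ((r₂ i).left j) * (r₂ i).right j) :=
        keyT
    _ = δ a • (1 : H) := by
        have h1 : ∀ i ∈ r.index,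
            (∑ j ∈ (r₂ i).index,
              δ (r.left i) • (HopfAlgebra.antipode (R := k) ((r₂ i).left j) * (r₂ i).right j))
            = δ (r.left i) • (Coalgebra.counit (R := k) (r.right i) • (1 : H)) := by
          intro i _
          rw [← Finset.smul_sum, HopfAlgebra.sum_antipode_mul_eq_smul (R := k) (r₂ i)]
        rw [Finset.sum_congr rfl h1]
        simp only [smul_smul]
        rw [← Finset.sum_smul]
        congr 1
        calc ∑ i ∈ r.index, δ (r.left i) * Coalgebra.counit (R := k) (r.right i)
            = δ (∑ i ∈ r.index, Coalgebra.counit (R := k) (r.right i) • r.left i) := by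
              rw [map_sum]
              refine (Finset.sum_congr rfl fun i _ => ?_).symm
              rw [map_smul, smul_eq_mul, mul_comm]
          _ = δ a := by rw [sum_counit_smul_right r]

end Twisted

end CyclicAux
namespace CyclicAux

variable {k H}

section TpowLemmas

open TensorProduct Coalgebra HopfAlgebra

variable (δ : H →ₐ[k] k) (σ : H)

lemma mul'_tpow (n : ℕ) (u v : H ⊗[k] Tpow k H n) :
    LinearMap.mul' k (Tpow k H (n+1)) (u ⊗ₜ[k] v) = u * v := rfl

lemma iterComul_succ_repr (n : ℕ) {ι : Type*} {a : H} (r : Coalgebra.Repr k a ι) :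
    (iterComul k H (n+1) a : H ⊗[k] Tpow k H (n+1))
      = ∑ i ∈ r.index, r.left i ⊗ₜ[k] iterComul k H n (r.right i) := by
  have e : (iterComul k H (n+1) a : H ⊗[k] Tpow k H (n+1))
      = TensorProduct.map LinearMap.id (iterComul k H n) (Coalgebra.comul (R := k) a) := rfl
  rw [e, ← r.eq, map_sum]
  simp only [TensorProduct.map_tmul, LinearMap.id_coe, id_eq]
  rfl

lemma iterComul_one (n : ℕ) : iterComul k H n (1 : H) = (1 : Tpow k H (n+1)) := by
  induction n with
  | zero =>
      exact (Algebra.TensorProduct.one_def).symm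
  | succ n ih =>
      have e : iterComul k H (n+1) (1 : H)
          = TensorProduct.map LinearMap.id (iterComul k H n)
              (Coalgebra.comul (R := k) (1 : H)) := rfl
      rw [e, Bialgebra.comul_one, Algebra.TensorProduct.one_def]
      simp only [TensorProduct.map_tmul, LinearMap.id_coe, id_eq, ih]
      exact (Algebra.TensorProduct.one_def).symm

lemma iterComul_mul (n : ℕ) (a b : H) :
    (iterComul k H n (a * b) : H ⊗[k] Tpow k H n)
      = (iterComul k H n a : H ⊗[k] Tpow k H n) * iterComul k H n b := by
  induction n generalizing a b with
  | zero =>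
      show (a * b) ⊗ₜ[k] (1 : Tpow k H 0)
        = (a ⊗ₜ[k] (1 : Tpow k H 0)) * (b ⊗ₜ[k] (1 : Tpow k H 0))
      rw [Algebra.TensorProduct.tmul_mul_tmul, one_mul]
  | succ n ih =>
      rw [iterComul_succ_repr n (mulRepr (ℛ k a) (ℛ k b))]
      simp only [mulRepr]
      rw [iterComul_succ_repr n (ℛ k a), iterComul_succ_repr n (ℛ k b)]
      erw [Finset.sum_mul_sum]
      rw [Finset.sum_product]
      refine Finset.sum_congr rfl fun i _ => Finset.sum_congr rfl fun j _ => ?_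
      erw [Algebra.TensorProduct.tmul_mul_tmul]
      exact congrArg (fun w => ((ℛ k a).left i * (ℛ k b).left j) ⊗ₜ[k] w) (ih _ _)

end TpowLemmas

end CyclicAux
namespace CyclicAux

variable {k H}

section DegenLemmas

open TensorProduct Coalgebra HopfAlgebra

variable (σ : H)

lemma degen_last_mul : ∀ (n : ℕ) (u v : H ⊗[k] Tpow k H n),
    degen k H n n (u * v) = degen k H n n u * degen k H n n v := by
  intro n
  induction n with
  | zero =>
      intro u v
      induction u using TensorProduct.induction_on with
      | zero => erw [zero_mul, map_zero, zero_mul]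
      | add u₁ u₂ h1 h2 => erw [add_mul, map_add, map_add, h1, h2, add_mul]
      | tmul x c =>
          induction v using TensorProduct.induction_on with
          | zero => erw [mul_zero, map_zero, mul_zero]
          | add v₁ v₂ h1 h2 => erw [mul_add, map_add, map_add, h1, h2, mul_add]
          | tmul x' c' =>
              rw [Algebra.TensorProduct.tmul_mul_tmul]
              have e1 : degen k H 0 0 ((x * x') ⊗ₜ[k] (c * c') : H ⊗[k] Tpow k H 0)
                  = Coalgebra.counit (R := k) (x * x') • (c * c') := rfl
              have e2 : degen k H 0 0 (x ⊗ₜ[k] c : H ⊗[k] Tpow k H 0)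
                  = Coalgebra.counit (R := k) x • c := rfl
              have e3 : degen k H 0 0 (x' ⊗ₜ[k] c' : H ⊗[k] Tpow k H 0)
                  = Coalgebra.counit (R := k) x' • c' := rfl
              rw [e1, e2, e3, Bialgebra.counit_mul, smul_mul_assoc, mul_smul_comm, smul_smul]
  | succ n ih =>
      intro u v
      induction u using TensorProduct.induction_on with
      | zero => erw [zero_mul, map_zero, zero_mul]
      | add u₁ u₂ h1 h2 => erw [add_mul, map_add, map_add, h1, h2, add_mul]
      | tmul x y =>
          induction v using TensorProduct.induction_on with
          | zero => erw [mul_zero, map_zero, mul_zero]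
          | add v₁ v₂ h1 h2 => erw [mul_add, map_add, map_add, h1, h2, mul_add]
          | tmul x' y' =>
              rw [Algebra.TensorProduct.tmul_mul_tmul]
              calc (id (degen k H (n+1) (n+1) (((x * x') ⊗ₜ[k] (y * y') : H ⊗[k] Tpow k H (n+1)))) : H ⊗[k] Tpow k H n)
                  = (x * x') ⊗ₜ[k] degen k H n n (y * y') := rfl
                _ = (x * x') ⊗ₜ[k] (degen k H n n y * degen k H n n y') := by
                    rw [show degen k H n n (y * y') = degen k H n n y * degen k H n n y'
                      from ih y y']
                _ = (id (degen k H (n+1) (n+1) ((x ⊗ₜ[k] y : H ⊗[k] Tpow k H (n+1)))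
                      * degen k H (n+1) (n+1) ((x' ⊗ₜ[k] y' : H ⊗[k] Tpow k H (n+1)))) : H ⊗[k] Tpow k H n) :=
                    (Algebra.TensorProduct.tmul_mul_tmul x x' (degen k H n n y) (degen k H n n y')).symm

lemma degen_last_iterComul : ∀ (n : ℕ) (a : H),
    degen k H (n+1) (n+1) (iterComul k H (n+1) a) = iterComul k H n a := by
  intro n
  induction n with
  | zero =>
      intro a
      erw [iterComul_succ_repr 0 (ℛ k a), map_sum]
      have e : ∀ i : (ℛ k a).ι,
          degen k H 1 1 (((ℛ k a).left i ⊗ₜ[k] iterComul k H 0 ((ℛ k a).right i)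
              : H ⊗[k] Tpow k H 1))
            = (ℛ k a).left i ⊗ₜ[k]
                (Coalgebra.counit (R := k) ((ℛ k a).right i) • (1 : Tpow k H 0)) := fun i => rfl
      rw [Finset.sum_congr rfl fun i _ => e i]
      have : ∀ i : (ℛ k a).ι,
          ((ℛ k a).left i ⊗ₜ[k]
              (Coalgebra.counit (R := k) ((ℛ k a).right i) • (1 : Tpow k H 0))
            : H ⊗[k] Tpow k H 0)
          = (Coalgebra.counit (R := k) ((ℛ k a).right i) • (ℛ k a).left i) ⊗ₜ[k]
              (1 : Tpow k H 0) := by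
        intro i
        rw [TensorProduct.tmul_smul, TensorProduct.smul_tmul']
      erw [Finset.sum_congr rfl fun i _ => this i, ← TensorProduct.sum_tmul,
        sum_counit_smul_right (ℛ k a)]
      rfl
  | succ n ih =>
      intro a
      erw [iterComul_succ_repr (n+1) (ℛ k a), map_sum, iterComul_succ_repr n (ℛ k a)]
      refine Finset.sum_congr rfl fun i _ => ?_
      calc (id (degen k H (n+2) (n+2) (((ℛ k a).left i ⊗ₜ[k] iterComul k H (n+1) ((ℛ k a).right i)
            : H ⊗[k] Tpow k H (n+2)))) : H ⊗[k] Tpow k H (n+1))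
          = (ℛ k a).left i ⊗ₜ[k]
              degen k H (n+1) (n+1) (iterComul k H (n+1) ((ℛ k a).right i)) := rfl
        _ = (ℛ k a).left i ⊗ₜ[k] iterComul k H n ((ℛ k a).right i) := by rw [ih]

lemma degen_last_append (hcounit : Coalgebra.counit (R := k) σ = 1) :
    ∀ (n : ℕ) (z : Tpow k H n), degen k H n n (appendEnd k H σ n z) = z := by
  intro n
  induction n with
  | zero =>
      intro z
      have hmap : degen k H 0 0 ∘ₗ appendEnd k H σ 0
          = (LinearMap.id : Tpow k H 0 →ₗ[k] Tpow k H 0) := by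
        apply LinearMap.ext_ring
        have e1 : appendEnd k H σ 0 (1 : k) = σ ⊗ₜ[k] (1 : k) := by
          show (1 : k) • (σ ⊗ₜ[k] (1 : k)) = σ ⊗ₜ[k] (1 : k)
          rw [one_smul]
        have e2 : degen k H 0 0 ((σ ⊗ₜ[k] (1 : k) : H ⊗[k] Tpow k H 0))
            = Coalgebra.counit (R := k) σ • (1 : Tpow k H 0) := rfl
        show degen k H 0 0 (appendEnd k H σ 0 (1 : k)) = (LinearMap.id : Tpow k H 0 →ₗ[k] Tpow k H 0) (1 : k)
        erw [e1, e2, hcounit, one_smul]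
        rfl
      have := LinearMap.congr_fun hmap z
      simpa only [LinearMap.comp_apply, LinearMap.id_apply] using this
  | succ n ih =>
      intro z
      have h : ∀ w : H ⊗[k] Tpow k H n,
          degen k H (n+1) (n+1) (appendEnd k H σ (n+1) w) = w := by
        intro w
        induction w using TensorProduct.induction_on with
        | zero => erw [map_zero]; rfl
        | add w₁ w₂ h1 h2 => erw [map_add, map_add, h1, h2]; rfl
        | tmul x y =>
            calc (id (degen k H (n+1) (n+1) (appendEnd k H σ (n+1) (x ⊗ₜ[k] y : H ⊗[k] Tpow k H n))) : H ⊗[k] Tpow k H n)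
                = x ⊗ₜ[k] degen k H n n (appendEnd k H σ n y) := rfl
              _ = x ⊗ₜ[k] y := by rw [ih]
      exact h z

end DegenLemmas

end CyclicAux
namespace CyclicAux

variable {k H}

section Main

open TensorProduct Coalgebra HopfAlgebra

/-- Definitional coercion `H^{⊗(n+1)} = H ⊗ H^{⊗n}`. -/
abbrev dn (n : ℕ) (w : Tpow k H (n+1)) : H ⊗[k] Tpow k H n := w

/-- Definitional coercion `H^{⊗(n+2)} = H ⊗ (H ⊗ H^{⊗n})`. -/
abbrev dn2 (n : ℕ) (w : Tpow k H (n+2)) : H ⊗[k] (H ⊗[k] Tpow k H n) := w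

variable (δ : H →ₐ[k] k) (σ : H)

/-- The partial cyclic operator `h ⊗ w ↦ (Δᵐ S̃ h) · w`. -/
noncomputable def Tmap (m : ℕ) : H ⊗[k] (H ⊗[k] Tpow k H m) →ₗ[k] H ⊗[k] Tpow k H m :=
  (LinearMap.mul' k (Tpow k H (m+1))
      ∘ₗ TensorProduct.map (iterComul k H m ∘ₗ twistedAntipode k H δ) LinearMap.id :
    H ⊗[k] Tpow k H (m+1) →ₗ[k] Tpow k H (m+1))

lemma iterComul_succ_repr2 (m : ℕ) {ι : Type*} {a : H} (r : Coalgebra.Repr k a ι) :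
    (iterComul k H (m+1) a : H ⊗[k] (H ⊗[k] Tpow k H m))
      = ∑ i ∈ r.index, r.left i ⊗ₜ[k] dn m (iterComul k H m (r.right i)) :=
  iterComul_succ_repr m r

lemma Tmap_tmul (m : ℕ) (x : H) (z : H ⊗[k] Tpow k H m) :
    Tmap δ m (x ⊗ₜ[k] z : H ⊗[k] (H ⊗[k] Tpow k H m))
      = dn m (iterComul k H m (twistedAntipode k H δ x)) * z := rfl

lemma Tmap_iterComul (m : ℕ) (y : H) :
    Tmap δ m (iterComul k H (m+1) y) = δ y • (1 : H ⊗[k] Tpow k H m) := by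
  have h1 : Tmap δ m (iterComul k H (m+1) y)
      = ∑ i ∈ (ℛ k y).index,
          Tmap δ m ((ℛ k y).left i ⊗ₜ[k] dn m (iterComul k H m ((ℛ k y).right i))) := by
    rw [iterComul_succ_repr2 m (ℛ k y), map_sum]
  rw [h1]
  have h2 : ∀ i : (ℛ k y).ι,
      Tmap δ m ((ℛ k y).left i ⊗ₜ[k] dn m (iterComul k H m ((ℛ k y).right i)))
        = (iterComul k H m (twistedAntipode k H δ ((ℛ k y).left i) * (ℛ k y).right i)
            : H ⊗[k] Tpow k H m) := by
    intro i
    calc Tmap δ m ((ℛ k y).left i ⊗ₜ[k] dn m (iterComul k H m ((ℛ k y).right i)))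
        = dn m (iterComul k H m (twistedAntipode k H δ ((ℛ k y).left i)))
            * dn m (iterComul k H m ((ℛ k y).right i)) := rfl
      _ = (id (iterComul k H m (twistedAntipode k H δ ((ℛ k y).left i) * (ℛ k y).right i))
            : H ⊗[k] Tpow k H m) := (iterComul_mul m _ _).symm
  rw [Finset.sum_congr rfl fun i _ => h2 i]
  have h3 : (∑ i ∈ (ℛ k y).index,
        (iterComul k H m (twistedAntipode k H δ ((ℛ k y).left i) * (ℛ k y).right i)
          : H ⊗[k] Tpow k H m))
      = iterComul k H m
          (∑ i ∈ (ℛ k y).index,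
            twistedAntipode k H δ ((ℛ k y).left i) * (ℛ k y).right i) :=
    (map_sum (iterComul k H m) _ _).symm
  erw [h3, sum_twistedAntipode_mul δ (ℛ k y), map_smul]
  exact congrArg (δ y • ·) (iterComul_one m)

lemma Tmap_mul_right (m : ℕ) (u : H ⊗[k] (H ⊗[k] Tpow k H m)) (v₁ : H)
    (v₂ : H ⊗[k] Tpow k H m) :
    Tmap δ m (u * (v₁ ⊗ₜ[k] v₂))
      = dn m (iterComul k H m (twistedAntipode k H δ v₁)) * Tmap δ m u * v₂ := by
  induction u using TensorProduct.induction_on with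
  | zero => simp
  | add u₁ u₂ h1 h2 => simp only [add_mul, map_add, h1, h2, mul_add]
  | tmul u₁ u₂ =>
      rw [Algebra.TensorProduct.tmul_mul_tmul, Tmap_tmul δ m (u₁ * v₁) (u₂ * v₂),
        twistedAntipode_mul]
      rw [show dn m (iterComul k H m
              (twistedAntipode k H δ v₁ * twistedAntipode k H δ u₁))
          = dn m (iterComul k H m (twistedAntipode k H δ v₁))
              * dn m (iterComul k H m (twistedAntipode k H δ u₁)) from iterComul_mul m _ _]
      rw [Tmap_tmul δ m u₁ u₂]
      simp only [mul_assoc]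

lemma step1 (hcounit : Coalgebra.counit (R := k) σ = 1) (m : ℕ) :
    degen k H (m+1) (m+1) ∘ₗ cyc k H δ σ (m+2) = Tmap δ m := by
  apply LinearMap.ext
  intro w
  have key : ∀ u : H ⊗[k] (H ⊗[k] Tpow k H m),
      degen k H (m+1) (m+1) (cyc k H δ σ (m+2) u) = Tmap δ m u := by
    intro u
    induction u using TensorProduct.induction_on with
    | zero => erw [map_zero]
    | add u₁ u₂ h1 h2 => erw [map_add, map_add, map_add, h1, h2]; rfl
    | tmul x z =>
        have e1 : cyc k H δ σ (m+2) (x ⊗ₜ[k] z : H ⊗[k] (H ⊗[k] Tpow k H m))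
            = dn (m+1) (iterComul k H (m+1) (twistedAntipode k H δ x))
                * dn (m+1) (appendEnd k H σ (m+1) z) := rfl
        rw [e1, degen_last_mul (m+1) _ _]
        rw [show degen k H (m+1) (m+1)
              (dn (m+1) (iterComul k H (m+1) (twistedAntipode k H δ x)))
            = iterComul k H m (twistedAntipode k H δ x) from degen_last_iterComul m _]
        rw [show degen k H (m+1) (m+1) (dn (m+1) (appendEnd k H σ (m+1) z)) = z
            from degen_last_append σ hcounit (m+1) z]
        exact (Tmap_tmul δ m x z).symm
  exact key w

lemma step2 (m : ℕ) :
    Tmap δ m ∘ₗ cyc k H δ σ (m+2) = cyc k H δ σ (m+1) ∘ₗ degen k H (m+1) 0 := by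
  apply LinearMap.ext
  intro w
  have key : ∀ u : H ⊗[k] (H ⊗[k] Tpow k H m),
      Tmap δ m (cyc k H δ σ (m+2) u)
        = cyc k H δ σ (m+1) (degen k H (m+1) 0 u) := by
    intro u
    induction u using TensorProduct.induction_on with
    | zero => erw [map_zero]
    | add u₁ u₂ h1 h2 => erw [map_add, map_add, map_add, map_add, h1, h2]; rfl
    | tmul x z =>
        induction z using TensorProduct.induction_on with
        | zero => erw [TensorProduct.tmul_zero, map_zero]
        | add z₁ z₂ h1 h2 => erw [TensorProduct.tmul_add, map_add (cyc k H δ σ (m+2)), map_add (Tmap δ m),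
            map_add (degen k H (m+1) 0), map_add (cyc k H δ σ (m+1)), h1, h2]; rfl
        | tmul g y =>
            have e1 : cyc k H δ σ (m+2) (x ⊗ₜ[k] (g ⊗ₜ[k] y) : H ⊗[k] (H ⊗[k] Tpow k H m))
                = dn2 m (iterComul k H (m+1) (twistedAntipode k H δ x))
                    * (g ⊗ₜ[k] dn m (appendEnd k H σ m y)) := rfl
            rw [e1, Tmap_mul_right δ m _ g (dn m (appendEnd k H σ m y))]
            rw [show Tmap δ m (dn2 m (iterComul k H (m+1) (twistedAntipode k H δ x)))
                = δ (twistedAntipode k H δ x) • (1 : H ⊗[k] Tpow k H m)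
                from Tmap_iterComul δ m _]
            rw [delta_twistedAntipode δ x, mul_smul_comm, mul_one, smul_mul_assoc]
            have e2 : degen k H (m+1) 0 (x ⊗ₜ[k] (g ⊗ₜ[k] y) : H ⊗[k] (H ⊗[k] Tpow k H m))
                = Coalgebra.counit (R := k) x • (g ⊗ₜ[k] y : H ⊗[k] Tpow k H m) := rfl
            erw [e2, map_smul]
            have e3 : cyc k H δ σ (m+1) (g ⊗ₜ[k] y : H ⊗[k] Tpow k H m)
                = dn m (iterComul k H m (twistedAntipode k H δ g))
                    * dn m (appendEnd k H σ m y) := rfl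
            rw [e3]
            rfl
  exact key w

end Main

end CyclicAux

/-- If the modular pair `(δ, σ)` is in involution, then for every `n ≥ 1`
(written `n = m + 1`) the cyclic and degeneracy operators satisfy
`τₙ ∘ σ₀ = σₙ ∘ τₙ₊₁²` as maps `H^{⊗(n+1)} → H^{⊗n}`. -/
theorem cyc_comp_degen_zero (δ : H →ₐ[k] k) (σ σ' : H)
    (hgrouplike : Coalgebra.comul (R := k) σ = σ ⊗ₜ[k] σ)
    (hcounit : Coalgebra.counit (R := k) σ = 1)
    (hinv : σ * σ' = 1) (hinv' : σ' * σ = 1)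
    (hmodular : δ σ = 1)
    (hinvolution : ∀ h : H,
      σ' * twistedAntipode k H δ (σ' * twistedAntipode k H δ h) = h)
    (m : ℕ) :
    cyc k H δ σ (m + 1) ∘ₗ degen k H (m + 1) 0
      = degen k H (m + 1) (m + 1)
          ∘ₗ (((cyc k H δ σ (m + 2) : Module.End k (Tpow k H (m + 2))) ^ 2 :
                Module.End k (Tpow k H (m + 2))) :
              Tpow k H (m + 2) →ₗ[k] Tpow k H (m + 2)) := by
  have h2 : (((cyc k H δ σ (m + 2) : Module.End k (Tpow k H (m + 2))) ^ 2 :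
        Module.End k (Tpow k H (m + 2))) :
      Tpow k H (m + 2) →ₗ[k] Tpow k H (m + 2))
      = cyc k H δ σ (m + 2) ∘ₗ cyc k H δ σ (m + 2) := by
    rw [pow_two]
    rfl
  rw [h2]
  calc (id (cyc k H δ σ (m + 1) ∘ₗ degen k H (m + 1) 0) : Tpow k H (m + 2) →ₗ[k] H ⊗[k] Tpow k H m)
      = CyclicAux.Tmap δ m ∘ₗ cyc k H δ σ (m + 2) := (CyclicAux.step2 δ σ m).symm
    _ = (id ((degen k H (m + 1) (m + 1) ∘ₗ cyc k H δ σ (m + 2)) ∘ₗ cyc k H δ σ (m + 2)) : Tpow k H (m + 2) →ₗ[k] H ⊗[k] Tpow k H m) := by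
        exact congrArg (fun f => f ∘ₗ cyc k H δ σ (m + 2)) (CyclicAux.step1 δ σ hcounit m).symm
    _ = (id (degen k H (m + 1) (m + 1) ∘ₗ (cyc k H δ σ (m + 2) ∘ₗ cyc k H δ σ (m + 2))) : Tpow k H (m + 2) →ₗ[k] H ⊗[k] Tpow k H m) := rfl
end

section
/- If the modular pair (δ,σ) is in involution, then for every n ≥ 1 and every 1 ≤ i ≤ n the cyclic and degeneracy operators satisfy τₙ ∘ σᵢ = σᵢ₋₁ ∘ τₙ₊₁ as maps H^{⊗(n+1)} → H^{⊗n}. -/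
open scoped TensorProduct

variable (k H : Type) [Field k] [Ring H] [HopfAlgebra k H]

/-- The degeneracy operators as algebra homomorphisms. -/
noncomputable def degenAlg : (n i : ℕ) → Tpow k H (n + 1) →ₐ[k] Tpow k H n
  | n, 0 =>
    ((Algebra.TensorProduct.lid k (Tpow k H n)).toAlgHom.comp
        (Algebra.TensorProduct.map (Bialgebra.counitAlgHom k H) (AlgHom.id k (Tpow k H n))) :
      H ⊗[k] Tpow k H n →ₐ[k] Tpow k H n)
  | 0, _ + 1 =>
    ((Algebra.TensorProduct.lid k (Tpow k H 0)).toAlgHom.comp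
        (Algebra.TensorProduct.map (Bialgebra.counitAlgHom k H) (AlgHom.id k (Tpow k H 0))) :
      H ⊗[k] Tpow k H 0 →ₐ[k] Tpow k H 0)
  | n + 1, i + 1 =>
    (Algebra.TensorProduct.map (AlgHom.id k H) (degenAlg n i) :
      H ⊗[k] Tpow k H (n + 1) →ₐ[k] H ⊗[k] Tpow k H n)

lemma degenAlg_toLinearMap : ∀ n i : ℕ, (degenAlg k H n i).toLinearMap = degen k H n i
  | n, 0 => by
    refine TensorProduct.ext' (M := H) (N := Tpow k H n) fun a b => ?_
    simp only [degenAlg, degen, AlgHom.toLinearMap_apply, AlgHom.coe_comp,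
      AlgEquiv.toAlgHom_eq_coe, AlgHom.coe_coe, Function.comp_apply,
      Algebra.TensorProduct.map_tmul, Bialgebra.counitAlgHom_apply, AlgHom.coe_id, id_eq,
      Algebra.TensorProduct.lid_tmul, LinearMap.coe_comp, LinearEquiv.coe_coe,
      TensorProduct.map_tmul, LinearMap.id_coe, TensorProduct.lid_tmul]
    rfl
  | 0, i + 1 => by
    refine TensorProduct.ext' (M := H) (N := Tpow k H 0) fun a b => ?_
    simp only [degenAlg, degen, AlgHom.toLinearMap_apply, AlgHom.coe_comp,
      AlgEquiv.toAlgHom_eq_coe, AlgHom.coe_coe, Function.comp_apply,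
      Algebra.TensorProduct.map_tmul, Bialgebra.counitAlgHom_apply, AlgHom.coe_id, id_eq,
      Algebra.TensorProduct.lid_tmul, LinearMap.coe_comp, LinearEquiv.coe_coe,
      TensorProduct.map_tmul, LinearMap.id_coe, TensorProduct.lid_tmul]
    rfl
  | n + 1, i + 1 => by
    refine TensorProduct.ext' (M := H) (N := Tpow k H (n + 1)) fun a b => ?_
    have := degenAlg_toLinearMap n i
    simp only [degenAlg, degen, AlgHom.toLinearMap_apply, Algebra.TensorProduct.map_tmul,
      TensorProduct.map_tmul, AlgHom.coe_id, id_eq, LinearMap.id_coe]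
    rw [← this]
    rfl

lemma degen_mul (n i : ℕ) (p q : Tpow k H (n + 1)) :
    degen k H n i (p * q) = degen k H n i p * degen k H n i q := by
  rw [← degenAlg_toLinearMap]
  exact map_mul (degenAlg k H n i) p q

lemma degen_comp_mul' (n i : ℕ) :
    degen k H n i ∘ₗ LinearMap.mul' k (Tpow k H (n + 1))
      = LinearMap.mul' k (Tpow k H n)
          ∘ₗ TensorProduct.map (degen k H n i) (degen k H n i) := by
  refine TensorProduct.ext' (M := Tpow k H (n + 1)) (N := Tpow k H (n + 1)) fun p q => ?_
  simp [LinearMap.mul'_apply, degen_mul]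

lemma degen_comp_iterComul : ∀ m j : ℕ, j ≤ m →
    degen k H (m + 1) j ∘ₗ iterComul k H (m + 1) = iterComul k H m
  | m, 0, _ => by
    show ((TensorProduct.lid k (Tpow k H (m + 1))).toLinearMap
          ∘ₗ TensorProduct.map Coalgebra.counit LinearMap.id)
        ∘ₗ (TensorProduct.map LinearMap.id (iterComul k H m) ∘ₗ Coalgebra.comul)
      = iterComul k H m
    rw [LinearMap.comp_assoc,
      ← LinearMap.comp_assoc _ _ (TensorProduct.map Coalgebra.counit LinearMap.id),
      ← TensorProduct.map_comp, LinearMap.comp_id, LinearMap.id_comp,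
      ← LinearMap.lTensor_comp_rTensor, LinearMap.comp_assoc,
      Coalgebra.rTensor_counit_comp_comul]
    ext h
    simp
  | m + 1, j + 1, hj => by
    have IH := degen_comp_iterComul m j (Nat.succ_le_succ_iff.mp hj)
    show (TensorProduct.map LinearMap.id (degen k H (m + 1) j)) ∘ₗ
        (TensorProduct.map LinearMap.id (iterComul k H (m + 1)) ∘ₗ Coalgebra.comul)
      = (TensorProduct.map LinearMap.id (iterComul k H m) ∘ₗ Coalgebra.comul :
          H →ₗ[k] H ⊗[k] Tpow k H (m + 1))
    rw [← LinearMap.comp_assoc, ← TensorProduct.map_comp, LinearMap.id_comp, IH]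

lemma lid_naturality {M N : Type} [AddCommMonoid M] [AddCommMonoid N]
    [Module k M] [Module k N] (f : M →ₗ[k] N) :
    (TensorProduct.lid k N).toLinearMap ∘ₗ LinearMap.lTensor k f
      = f ∘ₗ (TensorProduct.lid k M).toLinearMap := by
  refine TensorProduct.ext' fun c x => ?_
  simp

lemma degen_comp_appendEnd (a : H) : ∀ m j : ℕ, j ≤ m →
    degen k H (m + 1) j ∘ₗ appendEnd k H a (m + 1)
      = appendEnd k H a m ∘ₗ degen k H m j
  | m, 0, _ => by
    have hd : degen k H m 0 = ((TensorProduct.lid k (Tpow k H m)).toLinearMap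
          ∘ₗ TensorProduct.map Coalgebra.counit LinearMap.id :
            H ⊗[k] Tpow k H m →ₗ[k] Tpow k H m) := by
      cases m <;> rfl
    rw [hd]
    show ((TensorProduct.lid k (Tpow k H (m + 1))).toLinearMap
          ∘ₗ TensorProduct.map Coalgebra.counit LinearMap.id) ∘ₗ
        (TensorProduct.map LinearMap.id (appendEnd k H a m) :
          H ⊗[k] Tpow k H m →ₗ[k] H ⊗[k] Tpow k H (m + 1))
      = appendEnd k H a m ∘ₗ ((TensorProduct.lid k (Tpow k H m)).toLinearMap
          ∘ₗ TensorProduct.map Coalgebra.counit LinearMap.id)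
    rw [LinearMap.comp_assoc, ← TensorProduct.map_comp, LinearMap.comp_id, LinearMap.id_comp,
      ← LinearMap.lTensor_comp_rTensor, ← LinearMap.comp_assoc, lid_naturality,
      LinearMap.comp_assoc]
    rfl
  | m + 1, j + 1, hj => by
    have IH := degen_comp_appendEnd a m j (Nat.succ_le_succ_iff.mp hj)
    show (TensorProduct.map LinearMap.id (degen k H (m + 1) j)) ∘ₗ
        (TensorProduct.map LinearMap.id (appendEnd k H a (m + 1)))
      = (TensorProduct.map LinearMap.id (appendEnd k H a m)) ∘ₗ
          (TensorProduct.map LinearMap.id (degen k H m j) :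
            H ⊗[k] Tpow k H (m + 1) →ₗ[k] H ⊗[k] Tpow k H m)
    rw [← TensorProduct.map_comp, ← TensorProduct.map_comp, IH]

/-- If the modular pair `(δ, σ)` is in involution, then for every `n ≥ 1`
(written `n = m + 1`) and every `1 ≤ i ≤ n`, the cyclic and degeneracy operators satisfy
`τₙ ∘ σᵢ = σᵢ₋₁ ∘ τₙ₊₁` as maps `H^{⊗(n+1)} → H^{⊗n}`. -/
theorem cyc_comp_degen (δ : H →ₐ[k] k) (σ σ' : H)
    (hgrouplike : Coalgebra.comul (R := k) σ = σ ⊗ₜ[k] σ)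
    (hcounit : Coalgebra.counit (R := k) σ = 1)
    (hinv : σ * σ' = 1) (hinv' : σ' * σ = 1)
    (hmodular : δ σ = 1)
    (hinvolution : ∀ h : H,
      σ' * twistedAntipode k H δ (σ' * twistedAntipode k H δ h) = h)
    (m : ℕ) (i : ℕ) (hi1 : 1 ≤ i) (hi2 : i ≤ m + 1) :
    cyc k H δ σ (m + 1) ∘ₗ degen k H (m + 1) i
      = degen k H (m + 1) (i - 1) ∘ₗ cyc k H δ σ (m + 2) := by
  obtain ⟨j, rfl⟩ : ∃ j, i = j + 1 := ⟨i - 1, (Nat.succ_pred_eq_of_pos hi1).symm⟩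
  have hjm : j ≤ m := Nat.succ_le_succ_iff.mp hi2
  have h1 : cyc k H δ σ (m + 1) ∘ₗ degen k H (m + 1) (j + 1)
      = LinearMap.mul' k (Tpow k H (m + 1)) ∘ₗ
          TensorProduct.map (iterComul k H m ∘ₗ twistedAntipode k H δ)
            (appendEnd k H σ m ∘ₗ degen k H m j) := by
    show (LinearMap.mul' k (Tpow k H (m + 1)) ∘ₗ
        TensorProduct.map (iterComul k H m ∘ₗ twistedAntipode k H δ) (appendEnd k H σ m)) ∘ₗ
          TensorProduct.map LinearMap.id (degen k H m j) = _
    rw [LinearMap.comp_assoc, ← TensorProduct.map_comp, LinearMap.comp_id]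
  have h2 : degen k H (m + 1) j ∘ₗ cyc k H δ σ (m + 2)
      = LinearMap.mul' k (Tpow k H (m + 1)) ∘ₗ
          TensorProduct.map
            ((degen k H (m + 1) j ∘ₗ iterComul k H (m + 1)) ∘ₗ twistedAntipode k H δ)
            (degen k H (m + 1) j ∘ₗ appendEnd k H σ (m + 1)) := by
    show degen k H (m + 1) j ∘ₗ (LinearMap.mul' k (Tpow k H (m + 2)) ∘ₗ
        TensorProduct.map (iterComul k H (m + 1) ∘ₗ twistedAntipode k H δ)
          (appendEnd k H σ (m + 1))) = _
    rw [← LinearMap.comp_assoc, degen_comp_mul', LinearMap.comp_assoc,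
      ← TensorProduct.map_comp, ← LinearMap.comp_assoc (twistedAntipode k H δ)]
  simp only [Nat.add_sub_cancel]
  have e1 := degen_comp_iterComul k H m j hjm
  have e2 := degen_comp_appendEnd k H σ m j hjm
  rw [h1, h2, e1, e2]
end

section
/- Let τ be a σ-trace on an H-module algebra A, and for h¹,…,h^{n-1} ∈ H define γ(h¹⊗…⊗h^{n-1})(x⁰,…,x^{n-1}) = τ(x⁰ h¹(x¹) ⋯ h^{n-1}(x^{n-1})). Then γ intertwines the face operators with the Hochschild faces: γ(δⱼ(h¹⊗…⊗h^{n-1}))(x⁰,…,xⁿ) = γ(h¹⊗…⊗h^{n-1})(x⁰,…,x^j x^{j+1},…,xⁿ) for 0 ≤ j ≤ n-1, and γ(δₙ(h¹⊗…⊗h^{n-1}))(x⁰,…,xⁿ) = γ(h¹⊗…⊗h^{n-1})(xⁿ x⁰, x¹,…,x^{n-1}). -/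
open scoped TensorProduct

variable (k H : Type) [Field k] [Ring H] [HopfAlgebra k H]

variable (A : Type) [Ring A] [Algebra k A]

/-- Given an action `ρ` of `H` on `A` and slot values `x = (x¹, …, xⁿ)`, the linear map
`H^{⊗n} → A` sending an elementary tensor `k¹ ⊗ … ⊗ kⁿ` to the product
`k¹(x¹) ⋯ kⁿ(xⁿ)` (for `n = 0` it is `c ↦ c·1`). -/
noncomputable def actProd (ρ : H →ₗ[k] A →ₗ[k] A) :
    (n : ℕ) → (Fin n → A) → Tpow k H n →ₗ[k] A
  | 0, _ => (Algebra.linearMap k A : k →ₗ[k] A)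
  | n + 1, x =>
    (LinearMap.mul' k A
        ∘ₗ TensorProduct.map (ρ.flip (x 0)) (actProd ρ n (fun i => x i.succ)) :
      H ⊗[k] Tpow k H n →ₗ[k] A)


lemma actProd_tmul (ρ : H →ₗ[k] A →ₗ[k] A) (n : ℕ) (x : Fin (n + 1) → A)
    (h : H) (t : Tpow k H n) :
    actProd k H A ρ (n + 1) x (show H ⊗[k] Tpow k H n from h ⊗ₜ[k] t)
      = ρ h (x 0) * actProd k H A ρ n (fun i => x i.succ) t := rfl

lemma actProd_zero (ρ : H →ₗ[k] A →ₗ[k] A) (x : Fin 0 → A) (c : k) :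
    actProd k H A ρ 0 x c = algebraMap k A c := rfl


lemma face_zero (σ : H) (n : ℕ) (t : Tpow k H n) :
    face k H σ n 0 t = (show H ⊗[k] Tpow k H n from (1 : H) ⊗ₜ[k] t) := by
  rw [face]; rfl

lemma face_last_zero (σ : H) (j : ℕ) (c : k) :
    face k H σ 0 (j + 1) (show Tpow k H 0 from c)
      = (show H ⊗[k] k from c • (σ ⊗ₜ[k] (1 : k))) := by
  rw [face]; rfl

lemma face_one (σ : H) (m : ℕ) (h : H) (t : Tpow k H m) :
    face k H σ (m + 1) 1 (show H ⊗[k] Tpow k H m from h ⊗ₜ[k] t)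
      = (show H ⊗[k] (H ⊗[k] Tpow k H m) from
          (TensorProduct.assoc k H H (Tpow k H m)).toLinearMap
            ((Coalgebra.comul (R := k) h) ⊗ₜ[k] t)) := by
  rw [face]; rfl

lemma face_succ_succ (σ : H) (m i : ℕ) (h : H) (t : Tpow k H m) :
    face k H σ (m + 1) (i + 2) (show H ⊗[k] Tpow k H m from h ⊗ₜ[k] t)
      = (show H ⊗[k] Tpow k H (m + 1) from h ⊗ₜ[k] face k H σ m (i + 1) t) := by
  rw [face]; rfl


lemma el_zero (f : Fin 0 → H) : el k H 0 f = (show Tpow k H 0 from (1 : k)) := rfl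

lemma el_succ (n : ℕ) (f : Fin (n + 1) → H) :
    el k H (n + 1) f
      = (show H ⊗[k] Tpow k H n from f 0 ⊗ₜ[k] el k H n (fun i => f i.succ)) := rfl

lemma actProd_face_last (ρ : H →ₗ[k] A →ₗ[k] A) (σ : H) :
    ∀ (m : ℕ) (f : Fin m → H) (y : Fin (m + 1) → A),
      actProd k H A ρ (m + 1) y (face k H σ m (m + 1) (el k H m f))
        = actProd k H A ρ m (fun i => y i.castSucc) (el k H m f)
            * ρ σ (y (Fin.last m)) := by
  intro m
  induction m with
  | zero =>
    intro f y
    erw [el_zero, face_last_zero k H σ 0 (1 : k), one_smul,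
      actProd_tmul k H A ρ 0 y σ (1 : k)]
    simp [actProd_zero]
  | succ m ih =>
    intro f y
    rw [el_succ, face_succ_succ k H σ m m (f 0) (el k H m fun i => f i.succ),
      actProd_tmul k H A ρ (m + 1) y (f 0),
      ih (fun i => f i.succ) (fun i => y i.succ),
      actProd_tmul k H A ρ m (fun i => y i.castSucc) (f 0)]
    have hx : (fun i : Fin m => y i.succ.castSucc)
        = fun i : Fin m => y i.castSucc.succ := by
      funext i; rw [Fin.succ_castSucc]
    rw [hx, Fin.succ_last, Fin.castSucc_zero, mul_assoc]

lemma actProd_assoc_aux (ρ : H →ₗ[k] A →ₗ[k] A) (m : ℕ) (y : Fin (m + 2) → A)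
    (z : H ⊗[k] H) (t : Tpow k H m) :
    actProd k H A ρ (m + 2) y
        (show H ⊗[k] (H ⊗[k] Tpow k H m) from
          (TensorProduct.assoc k H H (Tpow k H m)).toLinearMap (z ⊗ₜ[k] t))
      = LinearMap.mul' k A (TensorProduct.map (ρ.flip (y 0)) (ρ.flip (y 1)) z)
          * actProd k H A ρ m (fun i => y i.succ.succ) t := by
  induction z using TensorProduct.induction_on with
  | zero =>
    rw [TensorProduct.zero_tmul, map_zero, map_zero, map_zero]
    exact (map_zero _).trans (zero_mul _).symm
  | tmul a b =>
    rw [show (TensorProduct.assoc k H H (Tpow k H m)).toLinearMap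
          ((a ⊗ₜ[k] b) ⊗ₜ[k] t) = a ⊗ₜ[k] (b ⊗ₜ[k] t) from rfl]
    erw [actProd_tmul k H A ρ (m + 1) y a]
    rw [actProd_tmul k H A ρ m (fun i => y i.succ) b t]
    simp only [TensorProduct.map_tmul, LinearMap.mul'_apply, LinearMap.flip_apply,
      Fin.succ_zero_eq_one]
    rw [mul_assoc]
  | add z₁ z₂ h₁ h₂ =>
    simp only [TensorProduct.add_tmul, map_add, add_mul] at *
    rw [← h₁, ← h₂]
    exact map_add _ _ _

lemma actProd_face_middle (ρ : H →ₗ[k] A →ₗ[k] A)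
    (hleibniz : ∀ (h : H) (a b : A),
      ρ h (a * b)
        = LinearMap.mul' k A
            (TensorProduct.map (ρ.flip a) (ρ.flip b) (Coalgebra.comul h)))
    (σ : H) :
    ∀ (j m : ℕ), j + 1 ≤ m → ∀ (f : Fin m → H) (y : Fin (m + 1) → A),
      actProd k H A ρ (m + 1) y (face k H σ m (j + 1) (el k H m f))
        = actProd k H A ρ m
            (fun i : Fin m =>
              if (i : ℕ) < j then y i.castSucc
              else if (i : ℕ) = j then y i.castSucc * y i.succ
              else y i.succ)
            (el k H m f) := by
  intro j
  induction j with
  | zero =>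
    intro m hm f y
    match m, hm with
    | m + 1, _ =>
      rw [show (0 : ℕ) + 1 = 1 from rfl]
      rw [el_succ, face_one k H σ m (f 0) (el k H m fun i => f i.succ),
        actProd_assoc_aux, ← hleibniz,
        actProd_tmul k H A ρ m _ (f 0)]
      refine congrArg₂ (· * ·) ?_ ?_
      · simp
      · exact congrArg (fun fn => actProd k H A ρ m fn (el k H m fun i => f i.succ))
          (funext fun i => by simp)
  | succ j ih =>
    intro m hm f y
    match m, hm with
    | m + 1, hm =>
      rw [show j + 1 + 1 = j + 2 from rfl]
      rw [el_succ, face_succ_succ k H σ m j (f 0) (el k H m fun i => f i.succ),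
        actProd_tmul k H A ρ (m + 1) y (f 0),
        ih m (by omega) (fun i => f i.succ) (fun i => y i.succ),
        actProd_tmul k H A ρ m _ (f 0)]
      refine congrArg₂ (· * ·) ?_ ?_
      · simp
      · exact congrArg (fun fn => actProd k H A ρ m fn (el k H m fun i => f i.succ))
          (funext fun i => by
            simp only [Fin.val_succ, Nat.add_lt_add_iff_right,
              Nat.add_right_cancel_iff, ← Fin.succ_castSucc])

/-- Let `τ` be a `σ`-trace on an `H`-module algebra `A` and, for `h¹, …, h^{n-1} ∈ H`,
let `γ(h¹ ⊗ … ⊗ h^{n-1})(x⁰, …, x^{n-1}) = τ(x⁰ h¹(x¹) ⋯ h^{n-1}(x^{n-1}))`.  Then `γ`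
intertwines the face operators with the Hochschild faces (here `n = m + 1 ≥ 1`):
`γ(δⱼ(h¹ ⊗ … ⊗ h^{n-1}))(x⁰, …, xⁿ) = γ(h¹ ⊗ … ⊗ h^{n-1})(x⁰, …, xʲxʲ⁺¹, …, xⁿ)` for
`0 ≤ j ≤ n-1`, and
`γ(δₙ(h¹ ⊗ … ⊗ h^{n-1}))(x⁰, …, xⁿ) = γ(h¹ ⊗ … ⊗ h^{n-1})(xⁿx⁰, x¹, …, x^{n-1})`. -/
theorem gamma_face (ρ : H →ₗ[k] A →ₗ[k] A)
    (hact : ∀ (g h : H) (a : A), ρ (g * h) a = ρ g (ρ h a))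
    (hone : ∀ a : A, ρ 1 a = a)
    (hleibniz : ∀ (h : H) (a b : A),
      ρ h (a * b)
        = LinearMap.mul' k A
            (TensorProduct.map (ρ.flip a) (ρ.flip b) (Coalgebra.comul h)))
    (σ : H)
    (hgrouplike : Coalgebra.comul (R := k) σ = σ ⊗ₜ[k] σ)
    (hcounit : Coalgebra.counit (R := k) σ = 1)
    (τ : A →ₗ[k] k)
    (htrace : ∀ a b : A, τ (a * b) = τ (b * ρ σ a))
    (m : ℕ) (f : Fin m → H) (x : Fin (m + 2) → A) :
    (∀ j : ℕ, j ≤ m →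
        τ (x 0 * actProd k H A ρ (m + 1) (fun i => x i.succ)
              (face k H σ m j (el k H m f)))
          = τ ((fun i : Fin (m + 1) =>
                  if (i : ℕ) < j then x i.castSucc
                  else if (i : ℕ) = j then x i.castSucc * x i.succ
                  else x i.succ) 0
              * actProd k H A ρ m
                  (fun i : Fin m =>
                    (fun i : Fin (m + 1) =>
                        if (i : ℕ) < j then x i.castSucc
                        else if (i : ℕ) = j then x i.castSucc * x i.succ
                        else x i.succ) i.succ)
                  (el k H m f)))
      ∧ τ (x 0 * actProd k H A ρ (m + 1) (fun i => x i.succ)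
            (face k H σ m (m + 1) (el k H m f)))
          = τ ((x (Fin.last (m + 1)) * x 0)
              * actProd k H A ρ m (fun i : Fin m => x i.succ.castSucc) (el k H m f)) := by
  constructor
  · intro j hj
    cases j with
    | zero =>
      rw [face_zero k H σ m (el k H m f),
        actProd_tmul k H A ρ m (fun i => x i.succ) 1 (el k H m f), hone,
        ← mul_assoc]
      refine congrArg τ (congrArg₂ (· * ·) ?_ ?_)
      · simp
      · exact congrArg (fun fn => actProd k H A ρ m fn (el k H m f))
          (funext fun i => by simp)
    | succ j' =>
      rw [actProd_face_middle k H A ρ hleibniz σ j' m hj f (fun i => x i.succ)]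
      refine congrArg τ (congrArg₂ (· * ·) ?_ ?_)
      · simp
      · exact congrArg (fun fn => actProd k H A ρ m fn (el k H m f))
          (funext fun i => by
            simp only [Fin.val_succ, Nat.add_lt_add_iff_right,
              Nat.add_right_cancel_iff, ← Fin.succ_castSucc])
  · rw [actProd_face_last k H A ρ σ m f (fun i => x i.succ)]
    have hfn : (fun i : Fin m => x i.castSucc.succ)
        = fun i : Fin m => x i.succ.castSucc := funext fun i => by
      rw [Fin.succ_castSucc]
    rw [hfn, Fin.succ_last]
    conv_rhs => rw [mul_assoc, htrace]
    rw [← mul_assoc]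
end
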